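/- arXiv:1712.07867 — 3 statements merged into one kernel-verified Lean document; each statement's English description precedes it below -/
import Mathlib

section
/- Let G be a connected cubic graph that is cyclically 3-edge-connected, and let S be a cycle-separating edge-cut of G of minimum size among all cycle-separating edge-cuts. Then every component of G − S is 2-connected. -/
open SimpleGraph

/-- Two edges (as unordered pairs) are adjacent: distinct and sharing a vertex. -/
def Sym2Adj {V : Type} (e f : Sym2 V) : Prop := e ≠ f ∧ ∃ v, v ∈ e ∧ v ∈ f

/-- A graph is cubic if every vertex has exactly 3 neighbours. -/
def IsCubic {V : Type} (G : SimpleGraph V) : Prop := ∀ v, Nat.card (G.neighborSet v) = 3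

/-- `G` admits a proper 3-edge-colouring. -/
def Colourable3 {V : Type} (G : SimpleGraph V) : Prop :=
  ∃ c : G.edgeSet → Fin 3, ∀ e f : G.edgeSet, Sym2Adj (e : Sym2 V) (f : Sym2 V) → c e ≠ c f

/-- A snark: a connected cubic graph with no proper 3-edge-colouring. -/
def IsSnark {V : Type} (G : SimpleGraph V) : Prop := G.Connected ∧ IsCubic G ∧ ¬ Colourable3 G

/-- `S` is a cycle-separating set of edges of `G`: at least two components of `G - S`
contain a cycle. -/
def CycleSeparating {V : Type} (G : SimpleGraph V) (S : Set (Sym2 V)) : Prop :=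
  S ⊆ G.edgeSet ∧ ∃ (u v : V) (p : (G.deleteEdges S).Walk u u) (q : (G.deleteEdges S).Walk v v),
    p.IsCycle ∧ q.IsCycle ∧ ¬ (G.deleteEdges S).Reachable u v

/-- `G` is cyclically `k`-edge-connected: no set of fewer than `k` edges is cycle-separating. -/
def CyclicallyEdgeConnected {V : Type} (G : SimpleGraph V) (k : ℕ) : Prop :=
  ∀ S : Set (Sym2 V), Nat.card S < k → ¬ CycleSeparating G S

/-- The cycle rank `β(G) = |E(G)| - |V(G)| + 1`. -/
noncomputable def cycleRank {V : Type} (G : SimpleGraph V) : ℕ :=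
  Nat.card G.edgeSet + 1 - Nat.card V

/-- The cyclic connectivity: the largest `k ≤ β(G)` such that `G` is cyclically
`k`-edge-connected. -/
noncomputable def cyclicConnectivity {V : Type} (G : SimpleGraph V) : ℕ :=
  sSup {k : ℕ | k ≤ cycleRank G ∧ CyclicallyEdgeConnected G k}

/-- `H` is a 2-factor of `G`: a spanning 2-regular subgraph. -/
def IsTwoFactor {V : Type} (G H : SimpleGraph V) : Prop :=
  H ≤ G ∧ ∀ v, Nat.card (H.neighborSet v) = 2

/-- The number of connected components of `H` with an odd number of vertices. -/
noncomputable def oddComponents {V : Type} (H : SimpleGraph V) : ℕ :=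
  Nat.card {c : H.ConnectedComponent // Odd (Nat.card c.supp)}

/-- The oddness of `G`: the minimum number of odd components over all 2-factors of `G`. -/
noncomputable def oddness {V : Type} (G : SimpleGraph V) : ℕ :=
  sInf {m : ℕ | ∃ H, IsTwoFactor G H ∧ _root_.oddComponents H = m}

/-- The set of edges of `G` with exactly one endpoint in `A`. -/
def edgeBoundary {V : Type} (G : SimpleGraph V) (A : Set V) : Set (Sym2 V) :=
  {e | e ∈ G.edgeSet ∧ ∃ u v, e = s(u, v) ∧ u ∈ A ∧ v ∉ A}

/-- A graph is bridgeless if no edge is a bridge. -/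
def Bridgeless {V : Type} (G : SimpleGraph V) : Prop := ∀ e, ¬ G.IsBridge e

/-- The resistance of `G`: the minimum number of edges to delete to obtain a
3-edge-colourable graph. -/
noncomputable def resistance {V : Type} (G : SimpleGraph V) : ℕ :=
  sInf {n : ℕ | ∃ F : Set (Sym2 V), F ⊆ G.edgeSet ∧ Nat.card F = n ∧
    Colourable3 (G.deleteEdges F)}

/-- `A` induces a 2-connected subgraph of `H`: at least 3 vertices, connected, and
still connected after the deletion of any single vertex. -/
def TwoConnectedOn {V : Type} (H : SimpleGraph V) (A : Set V) : Prop :=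
  3 ≤ Nat.card A ∧ (H.induce A).Connected ∧ ∀ v ∈ A, (H.induce (A \ {v})).Connected


section AuxStmt7
variable {V : Type}


/-- In a path starting at `u`, there is at most one edge at `u`. -/
lemma aux_path_start_unique {G : SimpleGraph V} {u v w₁ w₂ : V} {p : G.Walk u v}
    (hp : p.IsPath) (h1 : s(u, w₁) ∈ p.edges) (h2 : s(u, w₂) ∈ p.edges) : w₁ = w₂ := by
  induction p with
  | nil => simp at h1
  | @cons a b c h q ih =>
    rw [Walk.cons_isPath_iff] at hp
    rw [Walk.edges_cons, List.mem_cons] at h1 h2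
    have key : ∀ w : V, s(a, w) ∈ q.edges → False := by
      intro w hw
      exact hp.2 (q.fst_mem_support_of_mem_edges hw)
    rcases h1 with h1 | h1
    · rcases h2 with h2 | h2
      · rw [Sym2.eq_iff] at h1 h2
        rcases h1 with ⟨-, h1⟩ | ⟨h1a, h1b⟩
        · rcases h2 with ⟨-, h2⟩ | ⟨h2a, h2b⟩
          · rw [h1, h2]
          · exact absurd (h2a ▸ h) (G.irrefl)
        · exact absurd (h1a ▸ h) (G.irrefl)
      · exact absurd h2 (key _)
    · exact absurd h1 (key _)

/-- A path from `a` to `a` is nil. -/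
lemma aux_path_loop_nil {G : SimpleGraph V} {a : V} {p : G.Walk a a} (hp : p.IsPath) :
    p = Walk.nil := by
  cases p with
  | nil => rfl
  | cons h q =>
    rw [Walk.cons_isPath_iff] at hp
    exact absurd q.end_mem_support hp.2


/-- Build a cycle from a path plus a chord back to the start. -/
lemma aux_exists_cycle [DecidableEq V] {G : SimpleGraph V} {Q : Set V} {u v w : V} (p : G.Walk u v)
    (hp : p.IsPath) (hsup : ∀ z ∈ p.support, z ∈ Q) (hadj : G.Adj u w)
    (hw : w ∈ p.support) (hne : s(u, w) ∉ p.edges) :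
    ∃ (x : V) (c : G.Walk x x), c.IsCycle ∧ ∀ z ∈ c.support, z ∈ Q := by
  refine ⟨w, Walk.cons hadj.symm (p.takeUntil w hw), ?_, ?_⟩
  · rw [Walk.cons_isCycle_iff]
    refine ⟨hp.takeUntil hw, fun hmem => hne ?_⟩
    have := p.edges_takeUntil_subset hw hmem
    rwa [Sym2.eq_swap] at this
  · intro z hz
    rw [Walk.support_cons, List.mem_cons] at hz
    rcases hz with rfl | hz
    · exact hsup _ hw
    · exact hsup _ (p.support_takeUntil_subset hw hz)

/-- In a finite "forest inside Q", there is a vertex of Q with at most one neighbour in Q. -/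
lemma aux_exists_leaf [Fintype V] [DecidableEq V] {G : SimpleGraph V} {Q : Set V} (hQ : Q.Nonempty)
    (hacyc : ∀ (x : V) (c : G.Walk x x), c.IsCycle → ¬ (∀ z ∈ c.support, z ∈ Q)) :
    ∃ u ∈ Q, (G.neighborSet u ∩ Q).ncard ≤ 1 := by
  by_contra hcon
  push_neg at hcon
  -- every vertex of Q has ≥ 2 neighbours in Q; build arbitrarily long paths
  have hpath : ∀ n : ℕ, ∃ (x y : V) (p : G.Walk x y), p.IsPath ∧ (∀ z ∈ p.support, z ∈ Q)
      ∧ p.length = n := by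
    intro n
    induction n with
    | zero =>
      obtain ⟨x, hx⟩ := hQ
      exact ⟨x, x, Walk.nil, Walk.IsPath.nil, by simpa using hx, rfl⟩
    | succ n ih =>
      obtain ⟨x, y, p, hp, hsup, hlen⟩ := ih
      have hx : x ∈ Q := hsup _ p.start_mem_support
      have h2 : 1 < (G.neighborSet x ∩ Q).ncard := hcon x hx
      -- if some neighbour in Q avoids the support, extend
      by_cases hext : ∃ w ∈ G.neighborSet x ∩ Q, w ∉ p.support
      · obtain ⟨w, ⟨hwadj, hwQ⟩, hwns⟩ := hext
        refine ⟨w, y, Walk.cons (G.adj_symm hwadj) p, ?_, ?_, by simp [hlen]⟩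
        · rw [Walk.cons_isPath_iff]; exact ⟨hp, hwns⟩
        · intro z hz
          rw [Walk.support_cons, List.mem_cons] at hz
          rcases hz with rfl | hz
          · exact hwQ
          · exact hsup _ hz
      · push_neg at hext
        -- all neighbours of x in Q lie on the path: find two, build a cycle
        obtain ⟨w₁, w₂, hw₁, hw₂, hne⟩ := (Set.one_lt_ncard_iff (Set.toFinite _)).mp h2
        have he₁ : s(x, w₁) ∈ p.edges := by
          by_contra hne'
          obtain ⟨x', c, hc, hcsup⟩ := aux_exists_cycle p hp hsup hw₁.1 (hext _ hw₁) hne'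
          exact hacyc _ _ hc hcsup
        have he₂ : s(x, w₂) ∈ p.edges := by
          by_contra hne'
          obtain ⟨x', c, hc, hcsup⟩ := aux_exists_cycle p hp hsup hw₂.1 (hext _ hw₂) hne'
          exact hacyc _ _ hc hcsup
        exact absurd (aux_path_start_unique hp he₁ he₂) hne
  obtain ⟨x, y, p, hp, -, hlen⟩ := hpath (Fintype.card V)
  exact absurd (hlen ▸ hp.length_lt) (lt_irrefl _)

section D
variable {V : Type}

lemma aux_inter_split {A B C : Set V} (h : Disjoint B C) (hB : B.Finite) (hC : C.Finite) :
    (A ∩ (B ∪ C)).ncard = (A ∩ B).ncard + (A ∩ C).ncard := by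
  rw [Set.inter_union_distrib_left]
  exact Set.ncard_union_eq (h.mono Set.inter_subset_right Set.inter_subset_right)
    (hB.inter_of_right _) (hC.inter_of_right _)

open scoped Classical in
lemma aux_indicator_term {G : SimpleGraph V} {u w : V} :
    (G.neighborSet w ∩ {u}).ncard = if G.Adj u w then 1 else 0 := by
  split_ifs with h
  · have : G.neighborSet w ∩ {u} = {u} := by
      ext z; simp only [Set.mem_inter_iff, Set.mem_singleton_iff, SimpleGraph.mem_neighborSet]
      constructor
      · rintro ⟨-, rfl⟩; rfl
      · rintro rfl; exact ⟨h.symm, rfl⟩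
    rw [this, Set.ncard_singleton]
  · have : G.neighborSet w ∩ {u} = ∅ := by
      ext z; simp only [Set.mem_inter_iff, Set.mem_singleton_iff, SimpleGraph.mem_neighborSet,
        Set.mem_empty_iff_false, iff_false, not_and]
      rintro hz rfl; exact h hz.symm
    rw [this, Set.ncard_empty]

open scoped Classical in
lemma aux_indicator_sum [Fintype V] [DecidableEq V] {G : SimpleGraph V} (u : V) (R : Set V) :
    (∑ w ∈ (Set.toFinite R).toFinset, (G.neighborSet w ∩ {u}).ncard)
      = (G.neighborSet u ∩ R).ncard := by
  classical
  have h1 : ∀ w ∈ (Set.toFinite R).toFinset, (G.neighborSet w ∩ {u}).ncard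
      = if G.Adj u w then 1 else 0 := fun w _ => aux_indicator_term
  rw [Finset.sum_congr rfl h1, ← Finset.card_filter]
  rw [Set.ncard_eq_toFinset_card (G.neighborSet u ∩ R) (Set.toFinite _)]
  congr 1
  ext z
  simp only [Finset.mem_filter, Set.Finite.mem_toFinset, Set.mem_inter_iff,
    SimpleGraph.mem_neighborSet]
  tauto

end D

open scoped Classical in
lemma aux_forest_sum [Fintype V] [DecidableEq V] {G : SimpleGraph V} {Q : Set V}
    (hQ : Q.Nonempty)
    (hacyc : ∀ (x : V) (c : G.Walk x x), c.IsCycle → ¬ (∀ z ∈ c.support, z ∈ Q)) :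
    (∑ w ∈ (Set.toFinite Q).toFinset, (G.neighborSet w ∩ Q).ncard) + 2 ≤ 2 * Q.ncard := by
  obtain ⟨n, hn⟩ : ∃ n, Q.ncard = n := ⟨_, rfl⟩
  induction n using Nat.strong_induction_on generalizing Q with
  | _ n ih =>
  obtain ⟨u, huQ, hleaf⟩ := aux_exists_leaf hQ hacyc
  set Q' : Set V := Q \ {u} with hQ'def
  have hsplit : Q = Q' ∪ {u} := by
    rw [hQ'def, Set.diff_union_self, Set.union_eq_self_of_subset_right (by simpa using huQ)]
  have hdisj : Disjoint Q' {u} := by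
    rw [hQ'def]; exact Set.disjoint_sdiff_left.mono_right le_rfl
  have hcard : Q.ncard = Q'.ncard + 1 := by
    rw [hsplit, Set.ncard_union_eq hdisj (Set.toFinite _) (Set.toFinite _), Set.ncard_singleton]
  -- split each term
  have hterm : ∀ w : V, (G.neighborSet w ∩ Q).ncard
      = (G.neighborSet w ∩ Q').ncard + (G.neighborSet w ∩ {u}).ncard := by
    intro w
    conv_lhs => rw [hsplit]
    exact aux_inter_split hdisj (Set.toFinite _) (Set.toFinite _)
  have hsumsplit : (∑ w ∈ (Set.toFinite Q).toFinset, (G.neighborSet w ∩ Q).ncard)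
      = (∑ w ∈ (Set.toFinite Q').toFinset, (G.neighborSet w ∩ Q').ncard)
        + (G.neighborSet u ∩ Q').ncard
        + ((G.neighborSet u ∩ Q').ncard + (G.neighborSet u ∩ {u}).ncard) := by
    have hQf : (Set.toFinite Q).toFinset = insert u (Set.toFinite Q').toFinset := by
      ext z
      simp only [Set.Finite.mem_toFinset, Finset.mem_insert, hQ'def, Set.mem_diff,
        Set.mem_singleton_iff]
      by_cases hz : z = u <;> simp [hz, huQ]
    have hunotin : u ∉ (Set.toFinite Q').toFinset := by
      simp only [Set.Finite.mem_toFinset, hQ'def]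
      exact fun h => h.2 rfl
    rw [hQf, Finset.sum_insert hunotin, ← hterm u]
    have : ∀ w ∈ (Set.toFinite Q').toFinset, (G.neighborSet w ∩ Q).ncard
        = (G.neighborSet w ∩ Q').ncard + (G.neighborSet w ∩ {u}).ncard :=
      fun w _ => hterm w
    rw [Finset.sum_congr rfl this, Finset.sum_add_distrib, aux_indicator_sum u Q']
    ring
  have huu : (G.neighborSet u ∩ {u}).ncard = 0 := by
    have : G.neighborSet u ∩ {u} = ∅ := by
      ext z
      simp only [Set.mem_inter_iff, SimpleGraph.mem_neighborSet, Set.mem_singleton_iff,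
        Set.mem_empty_iff_false, iff_false, not_and]
      rintro hz rfl; exact G.irrefl hz
    rw [this, Set.ncard_empty]
  have hle1 : (G.neighborSet u ∩ Q').ncard ≤ 1 := by
    refine le_trans (Set.ncard_le_ncard ?_ (Set.toFinite _)) hleaf
    exact Set.inter_subset_inter_right _ (by rw [hQ'def]; exact Set.diff_subset)
  by_cases hQ'emp : Q'.Nonempty
  · have hacyc' : ∀ (x : V) (c : G.Walk x x), c.IsCycle → ¬ (∀ z ∈ c.support, z ∈ Q') := by
      intro x c hc hs
      exact hacyc x c hc (fun z hz => (hs z hz).1)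
    have := ih Q'.ncard (by omega) hQ'emp hacyc' rfl
    omega
  · have : Q' = ∅ := Set.not_nonempty_iff_eq_empty.mp hQ'emp
    have hz : (∑ w ∈ (Set.toFinite Q').toFinset, (G.neighborSet w ∩ Q').ncard) = 0 := by
      simp [this]
    have hc0 : Q'.ncard = 0 := by simp [this]
    have h1 : (G.neighborSet u ∩ Q').ncard = 0 := by simp [this]
    omega

/-- Walks in `G` minus the boundary of `A` cannot leave `A`. -/
lemma aux_walk_confine {G : SimpleGraph V} {A : Set V} {x y : V}
    (p : (G.deleteEdges (edgeBoundary G A)).Walk x y) (hx : x ∈ A) : y ∈ A := by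
  induction p with
  | nil => exact hx
  | @cons a b c h q ih =>
    refine ih ?_
    rw [SimpleGraph.deleteEdges_adj] at h
    by_contra hb
    exact h.2 ⟨G.mem_edgeSet.mpr h.1, a, b, rfl, hx, hb⟩

/-- A cycle of `G.deleteEdges S` whose support lies in a set avoiding the boundary of `A`
transfers to `G.deleteEdges (edgeBoundary G A)`. -/
lemma aux_cycle_transfer {G : SimpleGraph V} {S : Set (Sym2 V)} {A B : Set V} {x : V}
    (p : (G.deleteEdges S).Walk x x) (hc : p.IsCycle) (hsup : ∀ z ∈ p.support, z ∈ B)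
    (hB : B ⊆ A ∨ Disjoint B A) :
    ∃ q : (G.deleteEdges (edgeBoundary G A)).Walk x x, q.IsCycle := by
  have hedge : ∀ e ∈ p.edges, e ∈ (G.deleteEdges (edgeBoundary G A)).edgeSet := by
    intro e he
    have heG : e ∈ (G.deleteEdges S).edgeSet := p.edges_subset_edgeSet he
    rw [SimpleGraph.edgeSet_deleteEdges] at heG ⊢
    refine ⟨heG.1, ?_⟩
    rintro ⟨-, a, b, rfl, haA, hbA⟩
    have haB : a ∈ B := hsup _ (p.fst_mem_support_of_mem_edges he)
    have hbB : b ∈ B := hsup _ (p.snd_mem_support_of_mem_edges he)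
    rcases hB with hB | hB
    · exact hbA (hB hbB)
    · exact Set.disjoint_left.mp hB haB haA
  exact ⟨p.transfer _ hedge, hc.transfer hedge⟩

/-- The boundary of `A` is cycle-separating provided there are `G∖S` cycles inside and
outside `A`. -/
lemma aux_boundary_cyclesep {G : SimpleGraph V} {S : Set (Sym2 V)} {A : Set V} {x y : V}
    (pX : (G.deleteEdges S).Walk x x) (pY : (G.deleteEdges S).Walk y y)
    (hcX : pX.IsCycle) (hcY : pY.IsCycle)
    (hsX : ∀ z ∈ pX.support, z ∈ A) (hsY : ∀ z ∈ pY.support, z ∉ A) :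
    CycleSeparating G (edgeBoundary G A) := by
  obtain ⟨qX, hqX⟩ := aux_cycle_transfer pX hcX hsX (Or.inl (fun z hz => hz))
  obtain ⟨qY, hqY⟩ := aux_cycle_transfer pY hcY (fun z hz => hsY z hz)
    (Or.inr (Set.disjoint_left.mpr (fun a ha => ha)))
  refine ⟨fun e he => he.1, x, y, qX, qY, hqX, hqY, fun hr => ?_⟩
  obtain ⟨w⟩ := hr
  exact hsY y pY.end_mem_support (aux_walk_confine w (hsX x pX.start_mem_support))

lemma aux_support_comp_eq [DecidableEq V] {H : SimpleGraph V} {u w z : V} (p : H.Walk u w)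
    (hz : z ∈ p.support) :
    H.connectedComponentMk z = H.connectedComponentMk u :=
  (SimpleGraph.ConnectedComponent.sound (p.takeUntil z hz).reachable).symm

lemma aux_induce_reach {H : SimpleGraph V} {A : Set V} :
    ∀ {a b : V} (p : H.Walk a b), (∀ z ∈ p.support, z ∈ A) → ∀ (ha : a ∈ A) (hb : b ∈ A),
      (H.induce A).Reachable ⟨a, ha⟩ ⟨b, hb⟩ := by
  intro a b p
  induction p with
  | nil => intro _ ha hb; rfl
  | @cons x y z h q ih =>
    intro hsup hx hz
    have hy : y ∈ A := hsup y (by simp [Walk.support_cons])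
    have hadj : (H.induce A).Adj ⟨x, hx⟩ ⟨y, hy⟩ := by
      simp only [SimpleGraph.comap_adj, Function.Embedding.coe_subtype]
      exact h
    exact (hadj.reachable).trans (ih (fun w hw => hsup w (by simp [Walk.support_cons, hw])) hy hz)

lemma aux_comp_induce_connected [DecidableEq V] {H : SimpleGraph V} (c : H.ConnectedComponent) :
    (H.induce c.supp).Connected := by
  obtain ⟨u, hu⟩ := c.exists_rep
  rw [SimpleGraph.connected_iff]
  refine ⟨?_, ⟨⟨u, by rw [SimpleGraph.ConnectedComponent.mem_supp_iff]; exact hu⟩⟩⟩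
  · rintro ⟨a, ha⟩ ⟨b, hb⟩
    rw [SimpleGraph.ConnectedComponent.mem_supp_iff] at ha hb
    have hr : H.Reachable a b := SimpleGraph.ConnectedComponent.exact (ha.trans hb.symm)
    obtain ⟨p⟩ := hr
    refine aux_induce_reach p (fun z hz => ?_) _ _
    rw [SimpleGraph.ConnectedComponent.mem_supp_iff, aux_support_comp_eq p hz, ha]

lemma aux_walk_part {H : SimpleGraph V} {P Q : Set V}
    (hstep : ∀ x y, x ∈ P → y ∈ Q → ¬ H.Adj x y) :
    ∀ {a b : V} (p : H.Walk a b), (∀ z ∈ p.support, z ∈ P ∪ Q) → a ∈ P →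
      ∀ z ∈ p.support, z ∈ P := by
  intro a b p
  induction p with
  | nil =>
    intro _ ha z hz
    rw [Walk.support_nil, List.mem_singleton] at hz
    exact hz ▸ ha
  | @cons x y w h q ih =>
    intro hsup hx z hz
    have hyPQ : y ∈ P ∪ Q := hsup y (by simp [Walk.support_cons])
    have hy : y ∈ P := by
      rcases hyPQ with hy | hy
      · exact hy
      · exact absurd h (hstep x y hx hy)
    rw [Walk.support_cons, List.mem_cons] at hz
    rcases hz with rfl | hz
    · exact hx
    · exact ih (fun w hw => hsup w (by simp [Walk.support_cons, hw])) hy z hz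

lemma aux_path_part {H : SimpleGraph V} {P Q : Set V}
    (hstep : ∀ x y, x ∈ P → y ∈ Q → ¬ H.Adj x y) :
    ∀ {a b : V} (r : H.Walk a b), r.IsPath → (∀ z ∈ r.support, z ∈ P ∪ Q ∪ {b}) →
      b ∉ P → b ∉ Q → a ∈ P → ∀ z ∈ r.support, z ≠ b → z ∈ P := by
  intro a b r
  induction r with
  | nil =>
    intro _ _ _ _ ha z hz hzne
    rw [Walk.support_nil, List.mem_singleton] at hz
    exact absurd hz hzne
  | @cons x y w h q ih =>
    intro hp hsup hbP hbQ hx z hz hzne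
    rw [Walk.support_cons, List.mem_cons] at hz
    rcases hz with rfl | hz
    · exact hx
    · by_cases hyv : y = w
      · subst hyv
        have : q = Walk.nil := aux_path_loop_nil (hp.of_cons)
        rw [this, Walk.support_nil, List.mem_singleton] at hz
        exact absurd hz hzne
      · have hyPQ : y ∈ P ∪ Q ∪ {w} := hsup y (by simp [Walk.support_cons])
        have hy : y ∈ P := by
          rcases hyPQ with (hy | hy) | hy
          · exact hy
          · exact absurd h (hstep x y hx hy)
          · exact absurd hy hyv
        exact ih hp.of_cons (fun u hu => hsup u (by simp [Walk.support_cons, hu]))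
          hbP hbQ hy z hz hzne

section COUNT

variable {G : SimpleGraph V} {S : Set (Sym2 V)} {X Y P Q : Set V} {v₀ : V}

/-- no `S`-edge inside `X` -/
lemma aux_no_S_inside (hdisjXY : Disjoint X Y)
    (hS1 : ∀ e ∈ S, ∃ x y, e = s(x, y) ∧ x ∈ X ∧ y ∈ Y)
    {x y : V} (hx : x ∈ X) (hy : y ∈ X) : s(x, y) ∉ S := by
  intro hmem
  obtain ⟨x', y', heq, hx', hy'⟩ := hS1 _ hmem
  rw [Sym2.eq_iff] at heq
  rcases heq with ⟨rfl, rfl⟩ | ⟨rfl, rfl⟩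
  · exact Set.disjoint_left.mp hdisjXY hy hy'
  · exact Set.disjoint_left.mp hdisjXY hx hy'

/-- an `S`-edge with one endpoint in `X` has the other in `Y` -/
lemma aux_S_other (hdisjXY : Disjoint X Y)
    (hS1 : ∀ e ∈ S, ∃ x y, e = s(x, y) ∧ x ∈ X ∧ y ∈ Y)
    {x y : V} (hmem : s(x, y) ∈ S) (hx : x ∈ X) : y ∈ Y := by
  obtain ⟨x', y', heq, hx', hy'⟩ := hS1 _ hmem
  rw [Sym2.eq_iff] at heq
  rcases heq with ⟨rfl, rfl⟩ | ⟨rfl, rfl⟩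
  · exact hy'
  · exact absurd hx (Set.disjoint_right.mp hdisjXY hy')

lemma aux_cut_P [Fintype V]
    (hSE : S ⊆ G.edgeSet) (hdisjXY : Disjoint X Y)
    (hS1 : ∀ e ∈ S, ∃ x y, e = s(x, y) ∧ x ∈ X ∧ y ∈ Y)
    (hS2 : ∀ x ∈ X, ∀ y ∈ Y, G.Adj x y → s(x, y) ∈ S)
    (huniv : ∀ z : V, z ∈ X ∪ Y)
    (hv₀X : v₀ ∈ X)
    (hPQ : P ∪ Q = X \ {v₀}) (hPQe : ∀ x ∈ P, ∀ y ∈ Q, ¬ G.Adj x y) :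
    (edgeBoundary G P).ncard
      = {e | e ∈ S ∧ ∃ x y, e = s(x, y) ∧ x ∈ P ∧ y ∈ Y}.ncard
        + (G.neighborSet v₀ ∩ P).ncard := by
  have hPX : P ⊆ X := fun x hx => (hPQ ▸ Or.inl hx : x ∈ X \ {v₀}).1
  have hPv₀ : v₀ ∉ P := fun hx => (hPQ ▸ Or.inl hx : v₀ ∈ X \ {v₀}).2 rfl
  have hseteq : edgeBoundary G P
      = {e | e ∈ S ∧ ∃ x y, e = s(x, y) ∧ x ∈ P ∧ y ∈ Y}
        ∪ (fun w => s(v₀, w)) '' (G.neighborSet v₀ ∩ P) := by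
    ext e
    constructor
    · rintro ⟨heE, x, y, rfl, hxP, hyP⟩
      have hadj : G.Adj x y := G.mem_edgeSet.mp heE
      by_cases hs : s(x, y) ∈ S
      · exact Or.inl ⟨hs, x, y, rfl, hxP, aux_S_other hdisjXY hS1 hs (hPX hxP)⟩
      · have hyX : y ∈ X := by
          rcases huniv y with hy | hy
          · exact hy
          · exact absurd (hS2 x (hPX hxP) y hy hadj) hs
        have hyv₀ : y = v₀ := by
          by_contra hne
          have : y ∈ P ∪ Q := hPQ ▸ ⟨hyX, hne⟩
          rcases this with hy | hy
          · exact hyP hy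
          · exact hPQe x hxP y hy hadj
        subst hyv₀
        exact Or.inr ⟨x, ⟨hadj.symm, hxP⟩, Sym2.eq_swap⟩
    · rintro (⟨hs, x, y, rfl, hxP, hyY⟩ | ⟨w, ⟨hadj, hwP⟩, rfl⟩)
      · exact ⟨hSE hs, x, y, rfl, hxP, fun hyP =>
          Set.disjoint_left.mp hdisjXY (hPX hyP) hyY⟩
      · exact ⟨G.mem_edgeSet.mpr hadj, w, v₀, Sym2.eq_swap, hwP, hPv₀⟩
  rw [hseteq]
  rw [Set.ncard_union_eq ?_ (Set.toFinite _) (Set.toFinite _)]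
  · congr 1
    refine Set.ncard_image_of_injOn ?_
    rintro w ⟨hw, -⟩ w' ⟨hw', -⟩ heq
    rw [Sym2.congr_right] at heq
    exact heq
  · rw [Set.disjoint_left]
    rintro e ⟨hs, x, y, rfl, hxP, hyY⟩ ⟨w, ⟨hadj, hwP⟩, heq⟩
    have hv₀mem : v₀ ∈ s(x, y) := heq ▸ Sym2.mem_mk_left v₀ w
    rw [Sym2.mem_iff] at hv₀mem
    rcases hv₀mem with rfl | rfl
    · exact hPv₀ hxP
    · exact Set.disjoint_left.mp hdisjXY hv₀X hyY

end COUNT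

section COUNT2

variable {G : SimpleGraph V} {S : Set (Sym2 V)} {X Y P Q : Set V} {v₀ : V}

lemma aux_cut_Pv [Fintype V]
    (hSE : S ⊆ G.edgeSet) (hdisjXY : Disjoint X Y)
    (hS1 : ∀ e ∈ S, ∃ x y, e = s(x, y) ∧ x ∈ X ∧ y ∈ Y)
    (hS2 : ∀ x ∈ X, ∀ y ∈ Y, G.Adj x y → s(x, y) ∈ S)
    (huniv : ∀ z : V, z ∈ X ∪ Y)
    (hv₀X : v₀ ∈ X)
    (hPQ : P ∪ Q = X \ {v₀}) (hPQd : Disjoint P Q)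
    (hPQe : ∀ x ∈ P, ∀ y ∈ Q, ¬ G.Adj x y) :
    (edgeBoundary G (P ∪ {v₀})).ncard
      = {e | e ∈ S ∧ ∃ x y, e = s(x, y) ∧ x ∈ P ∧ y ∈ Y}.ncard
        + {e | e ∈ S ∧ v₀ ∈ e}.ncard
        + (G.neighborSet v₀ ∩ Q).ncard := by
  have hPX : P ⊆ X := fun x hx => (hPQ ▸ Or.inl hx : x ∈ X \ {v₀}).1
  have hPv₀ : v₀ ∉ P := fun hx => (hPQ ▸ Or.inl hx : v₀ ∈ X \ {v₀}).2 rfl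
  have hQX : Q ⊆ X := fun x hx => (hPQ ▸ Or.inr hx : x ∈ X \ {v₀}).1
  have hQv₀ : v₀ ∉ Q := fun hx => (hPQ ▸ Or.inr hx : v₀ ∈ X \ {v₀}).2 rfl
  have hseteq : edgeBoundary G (P ∪ {v₀})
      = ({e | e ∈ S ∧ ∃ x y, e = s(x, y) ∧ x ∈ P ∧ y ∈ Y}
          ∪ {e | e ∈ S ∧ v₀ ∈ e})
        ∪ (fun w => s(v₀, w)) '' (G.neighborSet v₀ ∩ Q) := by
    ext e
    constructor
    · rintro ⟨heE, x, y, rfl, hxA, hyA⟩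
      have hadj : G.Adj x y := G.mem_edgeSet.mp heE
      have hxX : x ∈ X := by
        rcases hxA with hx | hx
        · exact hPX hx
        · exact hx ▸ hv₀X
      by_cases hs : s(x, y) ∈ S
      · rcases hxA with hx | hx
        · exact Or.inl (Or.inl ⟨hs, x, y, rfl, hx, aux_S_other hdisjXY hS1 hs hxX⟩)
        · rw [Set.mem_singleton_iff] at hx
          subst hx
          exact Or.inl (Or.inr ⟨hs, Sym2.mem_mk_left _ _⟩)
      · have hyX : y ∈ X := by
          rcases huniv y with hy | hy
          · exact hy
          · exact absurd (hS2 x hxX y hy hadj) hs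
        have hyne : y ≠ v₀ := fun h => hyA (Or.inr h)
        have hyPQ : y ∈ P ∪ Q := hPQ ▸ ⟨hyX, hyne⟩
        have hyQ : y ∈ Q := by
          rcases hyPQ with hy | hy
          · exact absurd (Or.inl hy) hyA
          · exact hy
        have hxv₀ : x = v₀ := by
          rcases hxA with hx | hx
          · exact absurd hadj (hPQe x hx y hyQ)
          · exact hx
        subst hxv₀
        exact Or.inr ⟨y, ⟨hadj, hyQ⟩, rfl⟩
    · rintro ((⟨hs, x, y, rfl, hxP, hyY⟩ | ⟨hs, hv₀e⟩) | ⟨w, ⟨hadj, hwQ⟩, rfl⟩)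
      · refine ⟨hSE hs, x, y, rfl, Or.inl hxP, ?_⟩
        rintro (hy | hy)
        · exact Set.disjoint_left.mp hdisjXY (hPX hy) hyY
        · rw [Set.mem_singleton_iff] at hy
          exact Set.disjoint_left.mp hdisjXY (hy ▸ hv₀X) hyY
      · obtain ⟨x', y', heq, hx', hy'⟩ := hS1 _ hs
        rw [heq, Sym2.mem_iff] at hv₀e
        have hxv : x' = v₀ := by
          rcases hv₀e with h | h
          · exact h.symm
          · have : v₀ ∈ Y := by rw [h]; exact hy'
            exact absurd this (fun hY => Set.disjoint_left.mp hdisjXY hv₀X hY)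
        subst hxv
        refine ⟨hSE hs, x', y', heq, Or.inr rfl, ?_⟩
        rintro (hy | hy)
        · exact Set.disjoint_left.mp hdisjXY (hPX hy) hy'
        · rw [Set.mem_singleton_iff] at hy
          exact Set.disjoint_left.mp hdisjXY (hy ▸ hv₀X) hy'
      · refine ⟨G.mem_edgeSet.mpr hadj, v₀, w, rfl, Or.inr rfl, ?_⟩
        rintro (hw | hw)
        · exact Set.disjoint_left.mp hPQd hw hwQ
        · rw [Set.mem_singleton_iff] at hw
          exact hQv₀ (hw ▸ hwQ)
  have hd1 : Disjoint {e | e ∈ S ∧ ∃ x y, e = s(x, y) ∧ x ∈ P ∧ y ∈ Y}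
      {e | e ∈ S ∧ v₀ ∈ e} := by
    rw [Set.disjoint_left]
    rintro e ⟨hs, x, y, rfl, hxP, hyY⟩ ⟨-, hv₀e⟩
    rw [Sym2.mem_iff] at hv₀e
    rcases hv₀e with rfl | rfl
    · exact hPv₀ hxP
    · exact Set.disjoint_left.mp hdisjXY hv₀X hyY
  have hd2 : Disjoint ({e | e ∈ S ∧ ∃ x y, e = s(x, y) ∧ x ∈ P ∧ y ∈ Y}
      ∪ {e | e ∈ S ∧ v₀ ∈ e}) ((fun w => s(v₀, w)) '' (G.neighborSet v₀ ∩ Q)) := by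
    rw [Set.disjoint_right]
    rintro e ⟨w, ⟨hadj, hwQ⟩, rfl⟩
    rintro (⟨hs, x, y, heq, hxP, hyY⟩ | ⟨hs, -⟩)
    · have hv₀mem : v₀ ∈ s(x, y) := heq ▸ Sym2.mem_mk_left v₀ w
      rw [Sym2.mem_iff] at hv₀mem
      rcases hv₀mem with rfl | rfl
      · exact hPv₀ hxP
      · exact Set.disjoint_left.mp hdisjXY hv₀X hyY
    · exact aux_no_S_inside hdisjXY hS1 hv₀X (hQX hwQ) hs
  rw [hseteq, Set.ncard_union_eq hd2 (Set.toFinite _) (Set.toFinite _),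
    Set.ncard_union_eq hd1 (Set.toFinite _) (Set.toFinite _)]
  congr 1
  refine Set.ncard_image_of_injOn ?_
  rintro w ⟨-, -⟩ w' ⟨-, -⟩ heq
  rwa [Sym2.congr_right] at heq

end COUNT2

section COUNT3

variable {G : SimpleGraph V} {S : Set (Sym2 V)} {X Y P Q : Set V} {v₀ : V}

lemma aux_S_partition [Fintype V]
    (hdisjXY : Disjoint X Y)
    (hS1 : ∀ e ∈ S, ∃ x y, e = s(x, y) ∧ x ∈ X ∧ y ∈ Y)
    (hv₀X : v₀ ∈ X)
    (hPQ : P ∪ Q = X \ {v₀}) (hPQd : Disjoint P Q) :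
    S.ncard = {e | e ∈ S ∧ ∃ x y, e = s(x, y) ∧ x ∈ P ∧ y ∈ Y}.ncard
      + {e | e ∈ S ∧ ∃ x y, e = s(x, y) ∧ x ∈ Q ∧ y ∈ Y}.ncard
      + {e | e ∈ S ∧ v₀ ∈ e}.ncard := by
  have hPX : P ⊆ X := fun x hx => (hPQ ▸ Or.inl hx : x ∈ X \ {v₀}).1
  have hPv₀ : v₀ ∉ P := fun hx => (hPQ ▸ Or.inl hx : v₀ ∈ X \ {v₀}).2 rfl
  have hQX : Q ⊆ X := fun x hx => (hPQ ▸ Or.inr hx : x ∈ X \ {v₀}).1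
  have hQv₀ : v₀ ∉ Q := fun hx => (hPQ ▸ Or.inr hx : v₀ ∈ X \ {v₀}).2 rfl
  have hseteq : S = ({e | e ∈ S ∧ ∃ x y, e = s(x, y) ∧ x ∈ P ∧ y ∈ Y}
      ∪ {e | e ∈ S ∧ ∃ x y, e = s(x, y) ∧ x ∈ Q ∧ y ∈ Y})
      ∪ {e | e ∈ S ∧ v₀ ∈ e} := by
    ext e
    constructor
    · intro hs
      obtain ⟨x, y, heq, hx, hy⟩ := hS1 _ hs
      by_cases hxv : x = v₀
      · subst hxv
        exact Or.inr ⟨hs, heq ▸ Sym2.mem_mk_left _ _⟩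
      · have : x ∈ P ∪ Q := hPQ ▸ ⟨hx, hxv⟩
        rcases this with hxP | hxQ
        · exact Or.inl (Or.inl ⟨hs, x, y, heq, hxP, hy⟩)
        · exact Or.inl (Or.inr ⟨hs, x, y, heq, hxQ, hy⟩)
    · rintro ((⟨hs, -⟩ | ⟨hs, -⟩) | ⟨hs, -⟩) <;> exact hs
  have hdPQ : Disjoint {e | e ∈ S ∧ ∃ x y, e = s(x, y) ∧ x ∈ P ∧ y ∈ Y}
      {e | e ∈ S ∧ ∃ x y, e = s(x, y) ∧ x ∈ Q ∧ y ∈ Y} := by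
    rw [Set.disjoint_left]
    rintro e ⟨hs, x, y, rfl, hxP, hyY⟩ ⟨-, x', y', heq, hx'Q, hy'Y⟩
    rw [Sym2.eq_iff] at heq
    rcases heq with ⟨rfl, rfl⟩ | ⟨rfl, rfl⟩
    · exact Set.disjoint_left.mp hPQd hxP hx'Q
    · exact Set.disjoint_left.mp hdisjXY (hPX hxP) hy'Y
  have hdv : Disjoint ({e | e ∈ S ∧ ∃ x y, e = s(x, y) ∧ x ∈ P ∧ y ∈ Y}
      ∪ {e | e ∈ S ∧ ∃ x y, e = s(x, y) ∧ x ∈ Q ∧ y ∈ Y}) {e | e ∈ S ∧ v₀ ∈ e} := by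
    rw [Set.disjoint_right]
    rintro e ⟨-, hv₀e⟩
    rintro (⟨-, x, y, heq, hxR, hyY⟩ | ⟨-, x, y, heq, hxR, hyY⟩) <;>
    · rw [heq, Sym2.mem_iff] at hv₀e
      rcases hv₀e with rfl | rfl
      · first
        | exact hPv₀ hxR
        | exact hQv₀ hxR
      · exact Set.disjoint_left.mp hdisjXY hv₀X hyY
  conv_lhs => rw [hseteq]
  rw [Set.ncard_union_eq hdv (Set.toFinite _) (Set.toFinite _),
    Set.ncard_union_eq hdPQ (Set.toFinite _) (Set.toFinite _)]

lemma aux_nbr_partition [Fintype V]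
    (hdisjXY : Disjoint X Y)
    (hS1 : ∀ e ∈ S, ∃ x y, e = s(x, y) ∧ x ∈ X ∧ y ∈ Y)
    (huniv : ∀ z : V, z ∈ X ∪ Y)
    (hv₀X : v₀ ∈ X)
    (hPQ : P ∪ Q = X \ {v₀}) (hPQd : Disjoint P Q) :
    (G.neighborSet v₀).ncard = (G.neighborSet v₀ ∩ P).ncard
      + (G.neighborSet v₀ ∩ Q).ncard + (G.neighborSet v₀ ∩ Y).ncard := by
  have hPX : P ⊆ X := fun x hx => (hPQ ▸ Or.inl hx : x ∈ X \ {v₀}).1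
  have hQX : Q ⊆ X := fun x hx => (hPQ ▸ Or.inr hx : x ∈ X \ {v₀}).1
  have hsub : G.neighborSet v₀ = G.neighborSet v₀ ∩ ((P ∪ Q) ∪ Y) := by
    refine (Set.inter_eq_left.mpr ?_).symm
    intro z hz
    rcases huniv z with hzX | hzY
    · have : z ≠ v₀ := fun h => G.irrefl (h ▸ hz)
      exact Or.inl (hPQ ▸ (⟨hzX, this⟩ : z ∈ X \ {v₀}))
    · exact Or.inr hzY
  have hdisj1 : Disjoint (P ∪ Q : Set V) Y := by
    rw [Set.disjoint_left]
    rintro z (hz | hz) hzY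
    · exact Set.disjoint_left.mp hdisjXY (hPX hz) hzY
    · exact Set.disjoint_left.mp hdisjXY (hQX hz) hzY
  conv_lhs => rw [hsub]
  rw [aux_inter_split hdisj1 (Set.toFinite _) (Set.toFinite _),
    aux_inter_split hPQd (Set.toFinite _) (Set.toFinite _)]

lemma aux_sS_eq_nbY [Fintype V]
    (hSE : S ⊆ G.edgeSet) (hdisjXY : Disjoint X Y)
    (hS1 : ∀ e ∈ S, ∃ x y, e = s(x, y) ∧ x ∈ X ∧ y ∈ Y)
    (hS2 : ∀ x ∈ X, ∀ y ∈ Y, G.Adj x y → s(x, y) ∈ S)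
    (hv₀X : v₀ ∈ X) :
    {e | e ∈ S ∧ v₀ ∈ e}.ncard = (G.neighborSet v₀ ∩ Y).ncard := by
  have hseteq : {e | e ∈ S ∧ v₀ ∈ e} = (fun w => s(v₀, w)) '' (G.neighborSet v₀ ∩ Y) := by
    ext e
    constructor
    · rintro ⟨hs, hv₀e⟩
      obtain ⟨x, y, heq, hx, hy⟩ := hS1 _ hs
      rw [heq, Sym2.mem_iff] at hv₀e
      have hxv : x = v₀ := by
        rcases hv₀e with h | h
        · exact h.symm
        · have : v₀ ∈ Y := by rw [h]; exact hy
          exact absurd this (fun hY => Set.disjoint_left.mp hdisjXY hv₀X hY)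
      subst hxv
      have hadj : G.Adj x y := G.mem_edgeSet.mp (hSE (heq ▸ hs))
      exact ⟨y, ⟨hadj, hy⟩, heq.symm⟩
    · rintro ⟨w, ⟨hadj, hwY⟩, rfl⟩
      exact ⟨hS2 v₀ hv₀X w hwY hadj, Sym2.mem_mk_left _ _⟩
  rw [hseteq]
  refine Set.ncard_image_of_injOn ?_
  rintro w ⟨-, -⟩ w' ⟨-, -⟩ heq
  rwa [Sym2.congr_right] at heq

end COUNT3

section COUNT4

variable {G : SimpleGraph V} {S : Set (Sym2 V)} {X Y P Q : Set V} {v₀ : V}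

open scoped Classical in
lemma aux_sum_nbY [Fintype V]
    (hSE : S ⊆ G.edgeSet) (hdisjXY : Disjoint X Y)
    (hS2 : ∀ x ∈ X, ∀ y ∈ Y, G.Adj x y → s(x, y) ∈ S)
    (hQX : Q ⊆ X) :
    (∑ w ∈ (Set.toFinite Q).toFinset, (G.neighborSet w ∩ Y).ncard)
      = {e | e ∈ S ∧ ∃ x y, e = s(x, y) ∧ x ∈ Q ∧ y ∈ Y}.ncard := by
  classical
  rw [Set.ncard_eq_toFinset_card _ (Set.toFinite _)]
  have hset : (Set.toFinite {e | e ∈ S ∧ ∃ x y, e = s(x, y) ∧ x ∈ Q ∧ y ∈ Y}).toFinset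
      = (Set.toFinite Q).toFinset.biUnion
          (fun w => ((Set.toFinite (G.neighborSet w ∩ Y)).toFinset).image (fun y => s(w, y))) := by
    ext e
    simp only [Set.Finite.mem_toFinset, Set.mem_setOf_eq, Finset.mem_biUnion, Finset.mem_image,
      Set.mem_inter_iff, SimpleGraph.mem_neighborSet]
    constructor
    · rintro ⟨hs, x, y, rfl, hxQ, hyY⟩
      exact ⟨x, hxQ, y, ⟨G.mem_edgeSet.mp (hSE hs), hyY⟩, rfl⟩
    · rintro ⟨w, hwQ, y, ⟨hadj, hyY⟩, rfl⟩
      exact ⟨hS2 w (hQX hwQ) y hyY hadj, w, y, rfl, hwQ, hyY⟩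
  rw [hset, Finset.card_biUnion]
  · refine Finset.sum_congr rfl (fun w _ => ?_)
    rw [Finset.card_image_of_injOn, ← Set.ncard_eq_toFinset_card _ (Set.toFinite _)]
    rintro y hy y' hy' heq
    rwa [Sym2.congr_right] at heq
  · rintro w hw w' hw' hne
    simp only [Finset.mem_coe, Set.Finite.mem_toFinset] at hw hw'
    rw [Function.onFun, Finset.disjoint_left]
    rintro e he he'
    simp only [Finset.mem_image, Set.Finite.mem_toFinset, Set.mem_inter_iff,
      SimpleGraph.mem_neighborSet] at he he'
    obtain ⟨y, ⟨-, hyY⟩, rfl⟩ := he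
    obtain ⟨y', ⟨-, hy'Y⟩, heq⟩ := he'
    rw [Sym2.eq_iff] at heq
    rcases heq with ⟨rfl, rfl⟩ | ⟨rfl, rfl⟩
    · exact hne rfl
    · exact Set.disjoint_left.mp hdisjXY (hQX hw') hyY

open scoped Classical in
lemma aux_handshake [Fintype V]
    (hSE : S ⊆ G.edgeSet) (hdisjXY : Disjoint X Y)
    (hS1 : ∀ e ∈ S, ∃ x y, e = s(x, y) ∧ x ∈ X ∧ y ∈ Y)
    (hS2 : ∀ x ∈ X, ∀ y ∈ Y, G.Adj x y → s(x, y) ∈ S)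
    (huniv : ∀ z : V, z ∈ X ∪ Y)
    (hv₀X : v₀ ∈ X)
    (hPQ : P ∪ Q = X \ {v₀}) (hPQd : Disjoint P Q)
    (hPQe : ∀ x ∈ P, ∀ y ∈ Q, ¬ G.Adj x y)
    (hcubic : ∀ w : V, (G.neighborSet w).ncard = 3)
    (hQne : Q.Nonempty)
    (hacyc : ∀ (x : V) (c : (G.deleteEdges S).Walk x x), c.IsCycle →
      ¬ (∀ z ∈ c.support, z ∈ Q)) :
    Q.ncard + 2 ≤ {e | e ∈ S ∧ ∃ x y, e = s(x, y) ∧ x ∈ Q ∧ y ∈ Y}.ncard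
      + (G.neighborSet v₀ ∩ Q).ncard := by
  classical
  have hQX : Q ⊆ X := fun x hx => (hPQ ▸ Or.inr hx : x ∈ X \ {v₀}).1
  have hQv₀ : v₀ ∉ Q := fun hx => (hPQ ▸ Or.inr hx : v₀ ∈ X \ {v₀}).2 rfl
  set H := G.deleteEdges S with hH
  -- forest bound for H inside Q
  have hfs := aux_forest_sum (G := H) hQne hacyc
  -- H-neighbours in Q are G-neighbours in Q
  have hHG : ∀ w ∈ Q, H.neighborSet w ∩ Q = G.neighborSet w ∩ Q := by
    intro w hwQ
    ext z
    simp only [Set.mem_inter_iff, SimpleGraph.mem_neighborSet, hH,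
      SimpleGraph.deleteEdges_adj]
    constructor
    · rintro ⟨⟨h, -⟩, hz⟩; exact ⟨h, hz⟩
    · rintro ⟨h, hz⟩
      exact ⟨⟨h, aux_no_S_inside hdisjXY hS1 (hQX hwQ) (hQX hz)⟩, hz⟩
  -- partition of G-neighbourhoods of vertices of Q
  have hpart : ∀ w ∈ Q, (3 : ℕ) = (G.neighborSet w ∩ Q).ncard
      + (G.neighborSet w ∩ {v₀}).ncard + (G.neighborSet w ∩ Y).ncard := by
    intro w hwQ
    have hsub : G.neighborSet w = G.neighborSet w ∩ ((Q ∪ {v₀}) ∪ Y) := by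
      refine (Set.inter_eq_left.mpr ?_).symm
      intro z hz
      rcases huniv z with hzX | hzY
      · by_cases hzv : z = v₀
        · exact Or.inl (Or.inr hzv)
        · have hzPQ : z ∈ P ∪ Q := hPQ ▸ ⟨hzX, hzv⟩
          rcases hzPQ with hzP | hzQ
          · exact absurd (G.adj_symm hz) (hPQe z hzP w hwQ)
          · exact Or.inl (Or.inl hzQ)
      · exact Or.inr hzY
    have hd1 : Disjoint (Q ∪ {v₀} : Set V) Y := by
      rw [Set.disjoint_left]
      rintro z (hz | hz) hzY
      · exact Set.disjoint_left.mp hdisjXY (hQX hz) hzY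
      · rw [Set.mem_singleton_iff] at hz
        exact Set.disjoint_left.mp hdisjXY (hz ▸ hv₀X) hzY
    have hd2 : Disjoint Q ({v₀} : Set V) := by
      rw [Set.disjoint_right]
      rintro z hz
      rw [Set.mem_singleton_iff] at hz
      exact hz ▸ hQv₀
    rw [← hcubic w]
    conv_lhs => rw [hsub]
    rw [aux_inter_split hd1 (Set.toFinite _) (Set.toFinite _),
      aux_inter_split hd2 (Set.toFinite _) (Set.toFinite _)]
  -- sum the partition over Q
  have hsum3 : 3 * Q.ncard
      = (∑ w ∈ (Set.toFinite Q).toFinset, (G.neighborSet w ∩ Q).ncard)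
        + (G.neighborSet v₀ ∩ Q).ncard
        + {e | e ∈ S ∧ ∃ x y, e = s(x, y) ∧ x ∈ Q ∧ y ∈ Y}.ncard := by
    have h1 : 3 * Q.ncard = ∑ w ∈ (Set.toFinite Q).toFinset, (3 : ℕ) := by
      rw [Finset.sum_const, smul_eq_mul, mul_comm,
        ← Set.ncard_eq_toFinset_card _ (Set.toFinite _)]
    rw [h1, Finset.sum_congr rfl (fun w hw => hpart w ((Set.Finite.mem_toFinset _).mp hw)),
      Finset.sum_add_distrib, Finset.sum_add_distrib,
      aux_indicator_sum v₀ Q, aux_sum_nbY hSE hdisjXY hS2 hQX]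
  -- rewrite H-sums into G-sums
  have hHsum : (∑ w ∈ (Set.toFinite Q).toFinset, (H.neighborSet w ∩ Q).ncard)
      = (∑ w ∈ (Set.toFinite Q).toFinset, (G.neighborSet w ∩ Q).ncard) := by
    refine Finset.sum_congr rfl (fun w hw => ?_)
    rw [hHG w ((Set.Finite.mem_toFinset _).mp hw)]
  rw [hHsum] at hfs
  omega

end COUNT4


section KEY

open scoped Classical in
lemma aux_key [Fintype V] (G : SimpleGraph V)
    (hconn : G.Connected) (hcubic : IsCubic G) (h3 : CyclicallyEdgeConnected G 3)
    (S : Set (Sym2 V)) (hSE : S ⊆ G.edgeSet)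
    (u v : V) (pu : (G.deleteEdges S).Walk u u) (pv : (G.deleteEdges S).Walk v v)
    (hpu : pu.IsCycle) (hpv : pv.IsCycle)
    (hnr : ¬ (G.deleteEdges S).Reachable u v)
    (hmin : ∀ T : Set (Sym2 V), CycleSeparating G T → Nat.card S ≤ Nat.card T) :
    TwoConnectedOn (G.deleteEdges S) ((G.deleteEdges S).connectedComponentMk u).supp ∧
    ∀ z : V, z ∈ ((G.deleteEdges S).connectedComponentMk u).supp ∪
      ((G.deleteEdges S).connectedComponentMk v).supp := by
  classical
  set X : Set V := (((G.deleteEdges S).connectedComponentMk u).supp) with hXdef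
  set Y : Set V := (((G.deleteEdges S).connectedComponentMk v).supp) with hYdef
  have hXmem : ∀ z, z ∈ X ↔ (G.deleteEdges S).connectedComponentMk z = (G.deleteEdges S).connectedComponentMk u := by
    intro z; rw [hXdef, SimpleGraph.ConnectedComponent.mem_supp_iff]
  have hYmem : ∀ z, z ∈ Y ↔ (G.deleteEdges S).connectedComponentMk z = (G.deleteEdges S).connectedComponentMk v := by
    intro z; rw [hYdef, SimpleGraph.ConnectedComponent.mem_supp_iff]
  have hcompne : (G.deleteEdges S).connectedComponentMk u ≠ (G.deleteEdges S).connectedComponentMk v :=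
    fun h => hnr (SimpleGraph.ConnectedComponent.exact h)
  have hdisjXY : Disjoint X Y := by
    rw [Set.disjoint_left]
    intro z hzX hzY
    exact hcompne (((hXmem z).mp hzX).symm.trans ((hYmem z).mp hzY))
  have huX : u ∈ X := (hXmem u).mpr rfl
  have hvY : v ∈ Y := (hYmem v).mpr rfl
  have hsupu : ∀ z ∈ pu.support, z ∈ X := by
    intro z hz; exact (hXmem z).mpr (aux_support_comp_eq pu hz)
  have hsupv : ∀ z ∈ pv.support, z ∈ Y := by
    intro z hz; exact (hYmem z).mpr (aux_support_comp_eq pv hz)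
  have hadjX : ∀ {x y : V}, (G.deleteEdges S).Adj x y → x ∈ X → y ∈ X := by
    intro x y hadj hx
    rw [hXmem] at hx ⊢
    rw [← hx]
    exact (SimpleGraph.ConnectedComponent.connectedComponentMk_eq_of_adj hadj).symm
  have hadjY : ∀ {x y : V}, (G.deleteEdges S).Adj x y → x ∈ Y → y ∈ Y := by
    intro x y hadj hx
    rw [hYmem] at hx ⊢
    rw [← hx]
    exact (SimpleGraph.ConnectedComponent.connectedComponentMk_eq_of_adj hadj).symm
  have hCS : CycleSeparating G S := ⟨hSE, u, v, pu, pv, hpu, hpv, hnr⟩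
  have hk3 : 3 ≤ S.ncard := by
    by_contra hlt
    exact h3 S (by rw [Nat.card_coe_set_eq]; omega) hCS
  have hbd : ∀ (W : Set V), (∀ {x y : V}, (G.deleteEdges S).Adj x y → x ∈ W → y ∈ W) →
      edgeBoundary G W ⊆ S := by
    intro W hcl
    rintro e ⟨heE, x, y, rfl, hxW, hyW⟩
    by_contra hs
    refine hyW (hcl ?_ hxW)
    rw [SimpleGraph.deleteEdges_adj]
    exact ⟨G.mem_edgeSet.mp heE, hs⟩
  have hSX : S = edgeBoundary G X := by
    have hcs : CycleSeparating G (edgeBoundary G X) :=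
      aux_boundary_cyclesep pu pv hpu hpv hsupu
        (fun z hz => Set.disjoint_right.mp hdisjXY (hsupv z hz))
    have hle := hmin _ hcs
    rw [Nat.card_coe_set_eq, Nat.card_coe_set_eq] at hle
    exact (Set.eq_of_subset_of_ncard_le (hbd X hadjX) hle (Set.toFinite _)).symm
  have hSY : S = edgeBoundary G Y := by
    have hcs : CycleSeparating G (edgeBoundary G Y) :=
      aux_boundary_cyclesep pv pu hpv hpu hsupv
        (fun z hz => Set.disjoint_left.mp hdisjXY (hsupu z hz))
    have hle := hmin _ hcs
    rw [Nat.card_coe_set_eq, Nat.card_coe_set_eq] at hle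
    exact (Set.eq_of_subset_of_ncard_le (hbd Y hadjY) hle (Set.toFinite _)).symm
  have hS1 : ∀ e ∈ S, ∃ x y, e = s(x, y) ∧ x ∈ X ∧ y ∈ Y := by
    intro e he
    obtain ⟨heE, x, y, rfl, hxX, hyX⟩ := hSX ▸ he
    obtain ⟨-, x', y', heq, hx'Y, hy'Y⟩ := hSY ▸ he
    rw [Sym2.eq_iff] at heq
    rcases heq with ⟨rfl, rfl⟩ | ⟨rfl, rfl⟩
    · exact absurd hx'Y (Set.disjoint_left.mp hdisjXY hxX)
    · exact ⟨x, y, rfl, hxX, hx'Y⟩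
  have hS2 : ∀ x ∈ X, ∀ y ∈ Y, G.Adj x y → s(x, y) ∈ S := by
    intro x hx y hy hadj
    by_contra hs
    have hH : (G.deleteEdges S).Adj x y := by
      rw [SimpleGraph.deleteEdges_adj]; exact ⟨hadj, hs⟩
    exact Set.disjoint_left.mp hdisjXY (hadjX hH hx) hy
  have hwalkXY : ∀ {a b : V} (w : G.Walk a b), a ∈ X ∪ Y → b ∈ X ∪ Y := by
    intro a b w
    induction w with
    | nil => exact id
    | @cons x y z hadj q ih =>
      intro hx
      refine ih ?_
      by_cases hs : s(x, y) ∈ S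
      · obtain ⟨x', y', heq, hx', hy'⟩ := hS1 _ hs
        rw [Sym2.eq_iff] at heq
        rcases heq with ⟨rfl, rfl⟩ | ⟨rfl, rfl⟩
        · exact Or.inr hy'
        · exact Or.inl hx'
      · have hH : (G.deleteEdges S).Adj x y := by
          rw [SimpleGraph.deleteEdges_adj]; exact ⟨hadj, hs⟩
        rcases hx with hx | hx
        · exact Or.inl (hadjX hH hx)
        · exact Or.inr (hadjY hH hx)
  have huniv : ∀ z : V, z ∈ X ∪ Y := by
    intro z
    obtain ⟨w⟩ := hconn.preconnected u z
    exact hwalkXY w (Or.inl huX)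
  have hcubic' : ∀ w : V, (G.neighborSet w).ncard = 3 := by
    intro w
    rw [← Nat.card_coe_set_eq]
    exact hcubic w
  -- part (i): at least 3 vertices
  have hcard3 : 3 ≤ Nat.card X := by
    have hnd : pu.support.tail.Nodup := hpu.support_nodup
    have hlen : pu.support.tail.length = pu.length := by
      have h1 := pu.length_support
      have h2 : pu.support.tail.length = pu.support.length - 1 := List.length_tail
      omega
    have hsubf : pu.support.tail.toFinset ⊆ (Set.toFinite X).toFinset := by
      intro z hz
      rw [List.mem_toFinset] at hz
      rw [Set.Finite.mem_toFinset]
      exact hsupu z (List.mem_of_mem_tail hz)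
    have hcardf : pu.support.tail.toFinset.card = pu.length := by
      rw [List.toFinset_card_of_nodup hnd, hlen]
    rw [Nat.card_coe_set_eq, Set.ncard_eq_toFinset_card _ (Set.toFinite _)]
    calc 3 ≤ pu.length := hpu.three_le_length
    _ = pu.support.tail.toFinset.card := hcardf.symm
    _ ≤ (Set.toFinite X).toFinset.card := Finset.card_le_card hsubf
  refine ⟨⟨hcard3, aux_comp_induce_connected _, ?_⟩, huniv⟩
  -- part (iii): removing any vertex keeps the component connected
  intro v₀ hv₀X
  have hX3 : 3 ≤ X.ncard := by rw [← Nat.card_coe_set_eq]; exact hcard3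
  have hAcard : X.ncard = (X \ {v₀}).ncard + 1 := by
    rw [← Set.ncard_diff_singleton_add_one hv₀X (Set.toFinite _)]
  have hAne : (X \ {v₀}).Nonempty := by
    rw [← Set.ncard_pos (Set.toFinite _)]
    omega
  by_contra hnc
  rw [SimpleGraph.connected_iff] at hnc
  push_neg at hnc
  obtain ⟨a, b, hab⟩ : ∃ a b : ↑(X \ {v₀}),
      ¬ ((G.deleteEdges S).induce (X \ {v₀})).Reachable a b := by
    by_contra hall
    push_neg at hall
    exact (not_isEmpty_iff.mpr hAne.to_subtype) (hnc hall)
  obtain ⟨av, haA⟩ := a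
  obtain ⟨bv, hbA⟩ := b
  set P₁ : Set V := {x | ∃ hx : x ∈ X \ {v₀},
    ((G.deleteEdges S).induce (X \ {v₀})).Reachable ⟨av, haA⟩ ⟨x, hx⟩} with hP₁def
  set P₂ : Set V := (X \ {v₀}) \ P₁ with hP₂def
  have hP₁A : P₁ ⊆ X \ {v₀} := fun x hx => hx.choose
  have hP₂A : P₂ ⊆ X \ {v₀} := fun x hx => hx.1
  have ha1 : av ∈ P₁ := ⟨haA, SimpleGraph.Reachable.refl _⟩
  have hb2 : bv ∈ P₂ := ⟨hbA, fun hmem => hab hmem.choose_spec⟩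
  have hPQ : P₁ ∪ P₂ = X \ {v₀} := Set.union_diff_cancel hP₁A
  have hPQd : Disjoint P₁ P₂ := Set.disjoint_sdiff_right
  have hP₁X : P₁ ⊆ X := fun x hx => (hP₁A hx).1
  have hP₂X : P₂ ⊆ X := fun x hx => (hP₂A hx).1
  have hv₀P₁ : v₀ ∉ P₁ := fun hx => (hP₁A hx).2 rfl
  have hv₀P₂ : v₀ ∉ P₂ := fun hx => (hP₂A hx).2 rfl
  have hPQeH : ∀ x ∈ P₁, ∀ y ∈ P₂, ¬ (G.deleteEdges S).Adj x y := by
    rintro x hx y hy hadj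
    obtain ⟨hxA, hxr⟩ := hx
    obtain ⟨hyA, hyn⟩ := hy
    have hadj' : ((G.deleteEdges S).induce (X \ {v₀})).Adj ⟨x, hxA⟩ ⟨y, hyA⟩ := by
      simp only [SimpleGraph.comap_adj, Function.Embedding.coe_subtype]
      exact hadj
    exact hyn ⟨hyA, hxr.trans hadj'.reachable⟩
  have hPQe : ∀ x ∈ P₁, ∀ y ∈ P₂, ¬ G.Adj x y := by
    intro x hx y hy hadj
    refine hPQeH x hx y hy ?_
    rw [SimpleGraph.deleteEdges_adj]
    exact ⟨hadj, aux_no_S_inside hdisjXY hS1 (hP₁X hx) (hP₂X hy)⟩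
  have hdisjY : ∀ R : Set V, R ⊆ X → Disjoint Y R :=
    fun R hR => Set.disjoint_left.mpr
      (fun z hzY hzR => Set.disjoint_left.mp hdisjXY (hR hzR) hzY)
  -- cut bound via minimality
  have cutb : ∀ A' : Set V, Disjoint Y A' →
      (∃ (x₀ : V) (c : (G.deleteEdges S).Walk x₀ x₀), c.IsCycle ∧ ∀ z ∈ c.support, z ∈ A') →
      S.ncard ≤ (edgeBoundary G A').ncard := by
    rintro A' hdisj ⟨x₀, c, hc, hsup⟩
    have hcs := aux_boundary_cyclesep c pv hc hpv hsup
      (fun z hz => Set.disjoint_left.mp hdisj (hsupv z hz))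
    have := hmin _ hcs
    rwa [Nat.card_coe_set_eq, Nat.card_coe_set_eq] at this
  -- the universal solver for the cases with an acyclic side
  have hsolve : ∀ P Q : Set V, P ∪ Q = X \ {v₀} → Disjoint P Q →
      (∀ x ∈ P, ∀ y ∈ Q, ¬ G.Adj x y) → Q.Nonempty →
      (¬ ∃ (x : V) (c : (G.deleteEdges S).Walk x x), c.IsCycle ∧ ∀ z ∈ c.support, z ∈ Q) →
      (∃ (x₀ : V) (c : (G.deleteEdges S).Walk x₀ x₀), c.IsCycle ∧
        ∀ z ∈ c.support, z ∈ P ∪ {v₀}) →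
      ((∃ (x : V) (c : (G.deleteEdges S).Walk x x), c.IsCycle ∧ ∀ z ∈ c.support, z ∈ P) ∨
        2 ≤ (G.neighborSet v₀ ∩ P).ncard) →
      False := by
    intro P Q hPQu hPQd' hPQe' hQne hQacyc hcycPv hPcase
    have hPX : P ⊆ X := fun x hx => (hPQu ▸ Or.inl hx : x ∈ X \ {v₀}).1
    have hQX : Q ⊆ X := fun x hx => (hPQu ▸ Or.inr hx : x ∈ X \ {v₀}).1
    have hPvX : P ∪ {v₀} ⊆ X := by
      rintro z (hz | hz)
      · exact hPX hz
      · rw [Set.mem_singleton_iff] at hz; exact hz ▸ hv₀X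
    have hbPv : S.ncard ≤ {e | e ∈ S ∧ ∃ x y, e = s(x, y) ∧ x ∈ P ∧ y ∈ Y}.ncard
        + {e | e ∈ S ∧ v₀ ∈ e}.ncard + (G.neighborSet v₀ ∩ Q).ncard := by
      have h := cutb (P ∪ {v₀}) (hdisjY _ hPvX) hcycPv
      rwa [aux_cut_Pv hSE hdisjXY hS1 hS2 huniv hv₀X hPQu hPQd' hPQe'] at h
    have hhsh : Q.ncard + 2 ≤ {e | e ∈ S ∧ ∃ x y, e = s(x, y) ∧ x ∈ Q ∧ y ∈ Y}.ncard
        + (G.neighborSet v₀ ∩ Q).ncard :=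
      aux_handshake hSE hdisjXY hS1 hS2 huniv hv₀X hPQu hPQd' hPQe' hcubic' hQne
        (fun x c hc hs => hQacyc ⟨x, c, hc, hs⟩)
    have hpart := aux_S_partition hdisjXY hS1 hv₀X hPQu hPQd'
    have hnb := aux_nbr_partition (G := G) hdisjXY hS1 huniv hv₀X hPQu hPQd'
    have hsS := aux_sS_eq_nbY hSE hdisjXY hS1 hS2 hv₀X
    have hnb3 : (G.neighborSet v₀).ncard = 3 := hcubic' v₀
    have hnbQle : (G.neighborSet v₀ ∩ Q).ncard ≤ Q.ncard :=
      Set.ncard_le_ncard Set.inter_subset_right (Set.toFinite _)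
    have hQ1 : 1 ≤ Q.ncard := (Set.ncard_pos (Set.toFinite _)).mpr hQne
    rcases hPcase with hPcyc | h2nb
    · have hbP : S.ncard ≤ {e | e ∈ S ∧ ∃ x y, e = s(x, y) ∧ x ∈ P ∧ y ∈ Y}.ncard
          + (G.neighborSet v₀ ∩ P).ncard := by
        have h := cutb P (hdisjY _ hPX) hPcyc
        rwa [aux_cut_P hSE hdisjXY hS1 hS2 huniv hv₀X hPQu hPQe'] at h
      omega
    · omega
  -- case analysis on which parts contain cycles
  by_cases h1 : ∃ (x : V) (c : (G.deleteEdges S).Walk x x), c.IsCycle ∧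
      ∀ z ∈ c.support, z ∈ P₁
  <;> by_cases h2 : ∃ (x : V) (c : (G.deleteEdges S).Walk x x), c.IsCycle ∧
      ∀ z ∈ c.support, z ∈ P₂
  · -- both sides cyclic
    have hPQu2 : P₂ ∪ P₁ = X \ {v₀} := by rw [Set.union_comm]; exact hPQ
    have hPQe2 : ∀ x ∈ P₂, ∀ y ∈ P₁, ¬ G.Adj x y :=
      fun x hx y hy hadj => hPQe y hy x hx hadj.symm
    have hP₁vX : P₁ ∪ {v₀} ⊆ X := by
      rintro z (hz | hz)
      · exact hP₁X hz
      · rw [Set.mem_singleton_iff] at hz; exact hz ▸ hv₀X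
    have hP₂vX : P₂ ∪ {v₀} ⊆ X := by
      rintro z (hz | hz)
      · exact hP₂X hz
      · rw [Set.mem_singleton_iff] at hz; exact hz ▸ hv₀X
    have hbP1 : S.ncard ≤ {e | e ∈ S ∧ ∃ x y, e = s(x, y) ∧ x ∈ P₁ ∧ y ∈ Y}.ncard
        + (G.neighborSet v₀ ∩ P₁).ncard := by
      have h := cutb P₁ (hdisjY _ hP₁X) h1
      rwa [aux_cut_P hSE hdisjXY hS1 hS2 huniv hv₀X hPQ hPQe] at h
    have hbP2 : S.ncard ≤ {e | e ∈ S ∧ ∃ x y, e = s(x, y) ∧ x ∈ P₂ ∧ y ∈ Y}.ncard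
        + (G.neighborSet v₀ ∩ P₂).ncard := by
      have h := cutb P₂ (hdisjY _ hP₂X) h2
      rwa [aux_cut_P hSE hdisjXY hS1 hS2 huniv hv₀X hPQu2 hPQe2] at h
    have hbPv1 : S.ncard ≤ {e | e ∈ S ∧ ∃ x y, e = s(x, y) ∧ x ∈ P₁ ∧ y ∈ Y}.ncard
        + {e | e ∈ S ∧ v₀ ∈ e}.ncard + (G.neighborSet v₀ ∩ P₂).ncard := by
      obtain ⟨x, c, hc, hsup⟩ := h1
      have h := cutb (P₁ ∪ {v₀}) (hdisjY _ hP₁vX)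
        ⟨x, c, hc, fun z hz => Or.inl (hsup z hz)⟩
      rwa [aux_cut_Pv hSE hdisjXY hS1 hS2 huniv hv₀X hPQ hPQd hPQe] at h
    have hbPv2 : S.ncard ≤ {e | e ∈ S ∧ ∃ x y, e = s(x, y) ∧ x ∈ P₂ ∧ y ∈ Y}.ncard
        + {e | e ∈ S ∧ v₀ ∈ e}.ncard + (G.neighborSet v₀ ∩ P₁).ncard := by
      obtain ⟨x, c, hc, hsup⟩ := h2
      have h := cutb (P₂ ∪ {v₀}) (hdisjY _ hP₂vX)
        ⟨x, c, hc, fun z hz => Or.inl (hsup z hz)⟩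
      rwa [aux_cut_Pv hSE hdisjXY hS1 hS2 huniv hv₀X hPQu2 hPQd.symm hPQe2] at h
    have hpart := aux_S_partition hdisjXY hS1 hv₀X hPQ hPQd
    have hnb := aux_nbr_partition (G := G) hdisjXY hS1 huniv hv₀X hPQ hPQd
    have hsS := aux_sS_eq_nbY hSE hdisjXY hS1 hS2 hv₀X
    have hnb3 : (G.neighborSet v₀).ncard = 3 := hcubic' v₀
    omega
  · -- P₁ cyclic, P₂ acyclic
    obtain ⟨x, c, hc, hsup⟩ := h1
    exact hsolve P₁ P₂ hPQ hPQd hPQe ⟨bv, hb2⟩ h2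
      ⟨x, c, hc, fun z hz => Or.inl (hsup z hz)⟩ (Or.inl ⟨x, c, hc, hsup⟩)
  · -- P₂ cyclic, P₁ acyclic
    have hPQu2 : P₂ ∪ P₁ = X \ {v₀} := by rw [Set.union_comm]; exact hPQ
    have hPQe2 : ∀ x ∈ P₂, ∀ y ∈ P₁, ¬ G.Adj x y :=
      fun x hx y hy hadj => hPQe y hy x hx hadj.symm
    obtain ⟨x, c, hc, hsup⟩ := h2
    exact hsolve P₂ P₁ hPQu2 hPQd.symm hPQe2 ⟨av, ha1⟩ h1
      ⟨x, c, hc, fun z hz => Or.inl (hsup z hz)⟩ (Or.inl ⟨x, c, hc, hsup⟩)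
  · -- both sides acyclic : use the cycle pu through v₀
    by_cases hv₀mem : v₀ ∈ pu.support
    · -- rotate pu to start at v₀
      have hcrot : (pu.rotate v₀ hv₀mem).IsCycle := hpu.rotate hv₀mem
      have hcsup : ∀ z ∈ (pu.rotate v₀ hv₀mem).support, z ∈ X := by
        intro z hz
        rw [(pu.rotate v₀ hv₀mem).support_eq_cons, List.mem_cons] at hz
        rcases hz with rfl | hz
        · exact hv₀X
        · have hrot := pu.support_rotate v₀ hv₀mem
          exact hsupu z (List.mem_of_mem_tail (hrot.mem_iff.mp hz))
      obtain ⟨w₁, hadj, r, hceq⟩ : ∃ (w₁ : V) (hadj : (G.deleteEdges S).Adj v₀ w₁)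
          (r : (G.deleteEdges S).Walk w₁ v₀), pu.rotate v₀ hv₀mem = Walk.cons hadj r := by
        cases hcc : pu.rotate v₀ hv₀mem with
        | nil =>
          rw [hcc] at hcrot
          exact absurd hcrot Walk.IsCycle.not_of_nil
        | cons h q => exact ⟨_, h, q, rfl⟩
      rw [hceq] at hcrot hcsup
      have hrIsPath : r.IsPath := ((Walk.cons_isCycle_iff r hadj).mp hcrot).1
      have hrsup : ∀ z ∈ r.support, z ∈ X := fun z hz => hcsup z
        (by rw [Walk.support_cons]; exact List.mem_cons_of_mem _ hz)
      have hw₁X : w₁ ∈ X := hrsup _ r.start_mem_support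
      have hw₁ne : w₁ ≠ v₀ := fun h => (G.deleteEdges S).irrefl (h ▸ hadj)
      have hlen2 : 2 ≤ r.length := by
        have h3l := hcrot.three_le_length
        rw [Walk.length_cons] at h3l
        omega
      obtain ⟨w₂, hadj₂, rr, hreq⟩ : ∃ (w₂ : V) (h₂ : (G.deleteEdges S).Adj v₀ w₂)
          (rr : (G.deleteEdges S).Walk w₂ w₁), r.reverse = Walk.cons h₂ rr := by
        cases hrr : r.reverse with
        | nil =>
          exfalso
          have hh := congrArg Walk.length hrr
          rw [Walk.length_reverse] at hh
          simp only [Walk.length_nil] at hh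
          omega
        | cons h q => exact ⟨_, h, q, rfl⟩
      have hw₂mem : w₂ ∈ r.support := by
        have hh : w₂ ∈ r.reverse.support := by
          rw [hreq, Walk.support_cons]
          exact List.mem_cons_of_mem _ rr.start_mem_support
        rwa [Walk.support_reverse, List.mem_reverse] at hh
      have hw₂ne : w₂ ≠ v₀ := fun h => (G.deleteEdges S).irrefl (h ▸ hadj₂)
      have hw₁w₂ : w₁ ≠ w₂ := by
        intro heq12
        subst heq12
        have hrevp : r.reverse.IsPath := hrIsPath.reverse
        rw [hreq] at hrevp
        have hrrnil : rr = Walk.nil := aux_path_loop_nil hrevp.of_cons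
        have hh := congrArg Walk.length hreq
        rw [Walk.length_reverse, hrrnil] at hh
        simp only [Walk.length_cons, Walk.length_nil] at hh
        omega
      have hsupPQ : ∀ z ∈ r.support, z ∈ P₁ ∪ P₂ ∪ {v₀} := by
        intro z hz
        by_cases hzv : z = v₀
        · exact Or.inr hzv
        · exact Or.inl (hPQ ▸ (⟨hrsup z hz, hzv⟩ : z ∈ X \ {v₀}))
      have hGadj₁ : G.Adj v₀ w₁ := ((SimpleGraph.deleteEdges_adj).mp hadj).1
      have hGadj₂ : G.Adj v₀ w₂ := ((SimpleGraph.deleteEdges_adj).mp hadj₂).1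
      have hw₁A : w₁ ∈ P₁ ∪ P₂ := hPQ ▸ (⟨hw₁X, hw₁ne⟩ : w₁ ∈ X \ {v₀})
      rcases hw₁A with hw₁P | hw₁P
      · -- w₁ ∈ P₁
        have hstep : ∀ x y, x ∈ P₁ → y ∈ P₂ → ¬ (G.deleteEdges S).Adj x y :=
          fun x y hx hy => hPQeH x hx y hy
        have hconf := aux_path_part hstep r hrIsPath
          (fun z hz => by
            rcases hsupPQ z hz with (hz' | hz') | hz'
            · exact Or.inl (Or.inl hz')
            · exact Or.inl (Or.inr hz')
            · exact Or.inr hz') hv₀P₁ hv₀P₂ hw₁P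
        have hw₂P := hconf w₂ hw₂mem hw₂ne
        have hcycPv : ∀ z ∈ (Walk.cons hadj r).support, z ∈ P₁ ∪ {v₀} := by
          intro z hz
          rw [Walk.support_cons, List.mem_cons] at hz
          rcases hz with rfl | hz
          · exact Or.inr rfl
          · by_cases hzv : z = v₀
            · exact Or.inr hzv
            · exact Or.inl (hconf z hz hzv)
        have h2nb : 2 ≤ (G.neighborSet v₀ ∩ P₁).ncard := by
          have hsub : ({w₁, w₂} : Set V) ⊆ G.neighborSet v₀ ∩ P₁ := by
            rintro z (rfl | rfl)
            · exact ⟨hGadj₁, hw₁P⟩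
            · exact ⟨hGadj₂, hw₂P⟩
          calc 2 = ({w₁, w₂} : Set V).ncard := (Set.ncard_pair hw₁w₂).symm
          _ ≤ _ := Set.ncard_le_ncard hsub (Set.toFinite _)
        exact hsolve P₁ P₂ hPQ hPQd hPQe ⟨bv, hb2⟩ h2
          ⟨v₀, Walk.cons hadj r, hcrot, hcycPv⟩ (Or.inr h2nb)
      · -- w₁ ∈ P₂
        have hPQu2 : P₂ ∪ P₁ = X \ {v₀} := by rw [Set.union_comm]; exact hPQ
        have hPQe2 : ∀ x ∈ P₂, ∀ y ∈ P₁, ¬ G.Adj x y :=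
          fun x hx y hy hadj' => hPQe y hy x hx hadj'.symm
        have hstep : ∀ x y, x ∈ P₂ → y ∈ P₁ → ¬ (G.deleteEdges S).Adj x y :=
          fun x y hx hy hadj' => hPQeH y hy x hx hadj'.symm
        have hconf := aux_path_part hstep r hrIsPath
          (fun z hz => by
            rcases hsupPQ z hz with (hz' | hz') | hz'
            · exact Or.inl (Or.inr hz')
            · exact Or.inl (Or.inl hz')
            · exact Or.inr hz') hv₀P₂ hv₀P₁ hw₁P
        have hw₂P := hconf w₂ hw₂mem hw₂ne
        have hcycPv : ∀ z ∈ (Walk.cons hadj r).support, z ∈ P₂ ∪ {v₀} := by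
          intro z hz
          rw [Walk.support_cons, List.mem_cons] at hz
          rcases hz with rfl | hz
          · exact Or.inr rfl
          · by_cases hzv : z = v₀
            · exact Or.inr hzv
            · exact Or.inl (hconf z hz hzv)
        have h2nb : 2 ≤ (G.neighborSet v₀ ∩ P₂).ncard := by
          have hsub : ({w₁, w₂} : Set V) ⊆ G.neighborSet v₀ ∩ P₂ := by
            rintro z (rfl | rfl)
            · exact ⟨hGadj₁, hw₁P⟩
            · exact ⟨hGadj₂, hw₂P⟩
          calc 2 = ({w₁, w₂} : Set V).ncard := (Set.ncard_pair hw₁w₂).symm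
          _ ≤ _ := Set.ncard_le_ncard hsub (Set.toFinite _)
        exact hsolve P₂ P₁ hPQu2 hPQd.symm hPQe2 ⟨av, ha1⟩ h1
          ⟨v₀, Walk.cons hadj r, hcrot, hcycPv⟩ (Or.inr h2nb)
    · -- v₀ not on pu : pu lies in one part, contradiction with acyclicity
      have hsupA : ∀ z ∈ pu.support, z ∈ P₁ ∪ P₂ := by
        intro z hz
        refine hPQ ▸ (⟨hsupu z hz, ?_⟩ : z ∈ X \ {v₀})
        rintro rfl
        exact hv₀mem hz
      have huA : u ∈ P₁ ∪ P₂ := hsupA u pu.start_mem_support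
      rcases huA with huP | huP
      · have hstep : ∀ x y, x ∈ P₁ → y ∈ P₂ → ¬ (G.deleteEdges S).Adj x y :=
          fun x y hx hy => hPQeH x hx y hy
        exact h1 ⟨u, pu, hpu, aux_walk_part hstep pu hsupA huP⟩
      · have hstep : ∀ x y, x ∈ P₂ → y ∈ P₁ → ¬ (G.deleteEdges S).Adj x y :=
          fun x y hx hy hadj' => hPQeH y hy x hx hadj'.symm
        have hsupA' : ∀ z ∈ pu.support, z ∈ P₂ ∪ P₁ := by
          intro z hz
          rcases hsupA z hz with hz' | hz'
          · exact Or.inr hz'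
          · exact Or.inl hz'
        exact h2 ⟨u, pu, hpu, aux_walk_part hstep pu hsupA' huP⟩


end KEY

end AuxStmt7

/-- In a connected cyclically 3-edge-connected cubic graph, every component
left by the removal of a minimum-size cycle-separating edge-cut is 2-connected. -/
theorem stmt_7 {V : Type} [Fintype V] (G : SimpleGraph V)
    (hconn : G.Connected) (hcubic : IsCubic G) (h3 : CyclicallyEdgeConnected G 3)
    (S : Set (Sym2 V)) (hS : CycleSeparating G S)
    (hmin : ∀ T : Set (Sym2 V), CycleSeparating G T → Nat.card S ≤ Nat.card T) :
    ∀ c : (G.deleteEdges S).ConnectedComponent, TwoConnectedOn (G.deleteEdges S) c.supp := by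
  classical
  obtain ⟨hSE, u, v, pu, pv, hpu, hpv, hnr⟩ := hS
  have hu := aux_key G hconn hcubic h3 S hSE u v pu pv hpu hpv hnr hmin
  have hv := aux_key G hconn hcubic h3 S hSE v u pv pu hpv hpu
    (fun h => hnr h.symm) hmin
  intro c
  obtain ⟨w, hw⟩ := c.exists_rep
  have hwmem := hu.2 w
  rcases hwmem with hwX | hwY
  · have : c = (G.deleteEdges S).connectedComponentMk u := by
      rw [← hw]
      exact (SimpleGraph.ConnectedComponent.mem_supp_iff _ _).mp hwX
    rw [this]
    exact hu.1
  · have : c = (G.deleteEdges S).connectedComponentMk v := by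
      rw [← hw]
      exact (SimpleGraph.ConnectedComponent.mem_supp_iff _ _).mp hwY
    rw [this]
    exact hv.1
end

section
/- Let G be a connected cubic graph and let φ be a proper 4-edge-colouring of G with colours 0, 1, 2, 3 that minimizes the number of edges coloured 0 among all proper 4-edge-colourings of G with these colours. Let m be the number of edges coloured 0 and, for i ∈ {1,2,3}, let m_i be the number of edges coloured 0 that are adjacent to two edges coloured i. Then m_1 ≡ m_2 ≡ m_3 ≡ m (mod 2). -/
open SimpleGraph

/-!
In a proper 4-edge-colouring of a cubic graph every vertex `v` misses exactly one colour `μ v`.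
If `c` minimises the number of edges coloured `0`, then `μ v ≠ μ w` for every `0`-edge `vw`
(otherwise `vw` could be recoloured `μ v`), and `vw` is adjacent to two edges coloured `i`
exactly when `i ∉ {μ v, μ w}`. Let `D` be the set of vertices missing one of the two colours
`j, k` other than `0` and `i`. Each vertex of `D` lies on exactly one `0`-edge, and a `0`-edge
has two endpoints in `D` if it is counted by `m_i` and one otherwise, so `|D| = m + m_i`. On the
other hand the vertices not missing a colour `a` are exactly those covered by the matching of
`a`-edges, so there are evenly many of them, and hence
`|D| = |μ⁻¹ j| + |μ⁻¹ k| ≡ 2 |V| ≡ 0 (mod 2)`.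
-/

open Finset
open scoped Classical

variable {V : Type} {G : SimpleGraph V} {α : Type*}

def IsProperEdgeColouring (c : G.edgeSet → α) : Prop :=
  ∀ e f : G.edgeSet, Sym2Adj (e : Sym2 V) (f : Sym2 V) → c e ≠ c f

def HasColourAt (c : G.edgeSet → α) (v : V) (a : α) : Prop :=
  ∃ e : G.edgeSet, v ∈ (e : Sym2 V) ∧ c e = a

def MinimizesColourClass (c : G.edgeSet → α) (a : α) : Prop :=
  ∀ c' : G.edgeSet → α, IsProperEdgeColouring c' →
    Nat.card {e : G.edgeSet // c e = a} ≤ Nat.card {e : G.edgeSet // c' e = a}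

lemma Sym2Adj.symm {e f : Sym2 V} (h : Sym2Adj e f) : Sym2Adj f e :=
  ⟨h.1.symm, h.2.imp fun _ hv => ⟨hv.2, hv.1⟩⟩

lemma IsCubic.card_incident_edges (hG : IsCubic G) (v : V) :
    Nat.card {e : G.edgeSet // v ∈ (e : Sym2 V)} = 3 := by
  let incident : {e : G.edgeSet // v ∈ (e : Sym2 V)} ≃ G.incidenceSet v :=
    { toFun := fun e => ⟨e.1, e.1.2, e.2⟩
      invFun := fun e => ⟨⟨e.1, e.2.1⟩, e.2.2⟩ }
  rw [Nat.card_congr (incident.trans (G.incidenceSetEquivNeighborSet v)), hG v]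

lemma card_filter_mem_edge [Fintype V] (e : G.edgeSet) :
    #(univ.filter (· ∈ (e : Sym2 V))) = 2 := by
  rw [← Sym2.card_toFinset_of_not_isDiag _ (G.not_isDiag_of_mem_edgeSet e.2)]
  congr 1
  ext v
  simp

namespace IsProperEdgeColouring

variable {c : G.edgeSet → α}

lemma eq_of_mem_of_mem (hc : IsProperEdgeColouring c) {v : V} {e f : G.edgeSet}
    (he : v ∈ (e : Sym2 V)) (hf : v ∈ (f : Sym2 V)) (h : c e = c f) : e = f := by
  by_contra hne
  exact hc e f ⟨fun h' => hne (Subtype.ext h'), v, he, hf⟩ h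

lemma exists_missing_colour [Finite α] (hα : Nat.card α = 4) (hG : IsCubic G)
    (hc : IsProperEdgeColouring c) (v : V) :
    ∃ μ : α, ∀ a, a ≠ μ ↔ HasColourAt c v a := by
  set present := {a | HasColourAt c v a}
  have present_eq : present = c '' {e | v ∈ (e : Sym2 V)} := by
    ext a
    simp [present, HasColourAt]
  have h3 : present.ncard = 3 := by
    have hinj : Set.InjOn c {e | v ∈ (e : Sym2 V)} := fun e he f hf h =>
      hc.eq_of_mem_of_mem he hf h
    rw [present_eq, hinj.ncard_image, ← Nat.card_coe_set_eq]
    exact hG.card_incident_edges v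
  obtain ⟨μ, hμ⟩ : ∃ μ, presentᶜ = {μ} := by
    rw [← Set.ncard_eq_one]
    have := Set.ncard_add_ncard_compl present
    rw [h3, hα] at this
    omega
  refine ⟨μ, fun a => ?_⟩
  rw [Ne, ← Set.mem_singleton_iff, ← hμ, Set.mem_compl_iff, not_not]
  rfl

lemma update (hc : IsProperEdgeColouring c) [DecidableEq G.edgeSet] {e : G.edgeSet} {b : α}
    (hb : ∀ f : G.edgeSet, Sym2Adj (e : Sym2 V) (f : Sym2 V) → c f ≠ b) :
    IsProperEdgeColouring (Function.update c e b) := by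
  intro f g hfg
  rcases eq_or_ne f e with rfl | hf <;> rcases eq_or_ne g f with rfl | hg
  · exact absurd rfl hfg.1
  · rw [Function.update_self, Function.update_of_ne hg]
    exact (hb g hfg).symm
  · exact absurd rfl hfg.1
  rcases eq_or_ne g e with rfl | hge
  · rw [Function.update_self, Function.update_of_ne hf]
    exact hb f hfg.symm
  · rw [Function.update_of_ne hf, Function.update_of_ne hge]
    exact hc f g hfg

lemma exists_two_adj_iff (hc : IsProperEdgeColouring c) (e : G.edgeSet) {i : α}
    (hi : c e ≠ i) :
    (∃ f g : G.edgeSet, f ≠ g ∧ Sym2Adj (e : Sym2 V) (f : Sym2 V) ∧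
        Sym2Adj (e : Sym2 V) (g : Sym2 V) ∧ c f = i ∧ c g = i) ↔
      ∀ v ∈ (e : Sym2 V), HasColourAt c v i := by
  constructor
  · rintro ⟨f, g, hfg, ⟨-, x, hxe, hxf⟩, ⟨-, y, hye, hyg⟩, rfl, hcg⟩ u hu
    have hxy : x ≠ y := by
      rintro rfl
      exact hfg (hc.eq_of_mem_of_mem hxf hyg hcg.symm)
    rw [(Sym2.mem_and_mem_iff hxy).1 ⟨hxe, hye⟩, Sym2.mem_iff] at hu
    rcases hu with rfl | rfl
    exacts [⟨f, hxf, rfl⟩, ⟨g, hyg, hcg⟩]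
  · intro h
    obtain ⟨v, w, hvw⟩ : ∃ v w, (e : Sym2 V) = s(v, w) :=
      Sym2.ind (fun v w => ⟨v, w, rfl⟩) (e : Sym2 V)
    have hvw_ne : v ≠ w := G.ne_of_adj (by rw [← SimpleGraph.mem_edgeSet, ← hvw]; exact e.2)
    obtain ⟨f, hvf, hcf⟩ := h v (by simp [hvw])
    obtain ⟨g, hwg, hcg⟩ := h w (by simp [hvw])
    have hfe : f ≠ e := by rintro rfl; exact hi hcf
    have hge : g ≠ e := by rintro rfl; exact hi hcg
    refine ⟨f, g, ?_, ⟨fun h' => hfe (Subtype.ext h'.symm), v, by simp [hvw], hvf⟩,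
      ⟨fun h' => hge (Subtype.ext h'.symm), w, by simp [hvw], hwg⟩, hcf, hcg⟩
    rintro rfl
    exact hfe (Subtype.ext (((Sym2.mem_and_mem_iff hvw_ne).1 ⟨hvf, hwg⟩).trans hvw.symm))

lemma card_eq_sum_card_filter_mem [Fintype V] [DecidableEq α] (hc : IsProperEdgeColouring c)
    (a : α) (D : Finset V) (hD : ∀ v ∈ D, HasColourAt c v a) :
    #D = ∑ e ∈ univ.filter (c · = a), #(D.filter (· ∈ (e : Sym2 V))) := by
  have hunique : ∀ v ∈ D, #((univ.filter (c · = a)).bipartiteAbove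
      (fun (v : V) (e : G.edgeSet) => v ∈ (e : Sym2 V)) v) = 1 := by
    intro v hv
    obtain ⟨e, hve, hce⟩ := hD v hv
    rw [card_eq_one]
    refine ⟨e, eq_singleton_iff_unique_mem.2 ⟨by simp [bipartiteAbove, hve, hce], ?_⟩⟩
    simp only [bipartiteAbove, mem_filter, mem_univ, true_and, and_imp]
    exact fun f hcf hvf => hc.eq_of_mem_of_mem hvf hve (hcf.trans hce.symm)
  calc #D = ∑ v ∈ D, 1 := card_eq_sum_ones D
    _ = _ := (sum_congr rfl fun v hv => (hunique v hv).symm)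
    _ = _ := sum_card_bipartiteAbove_eq_sum_card_bipartiteBelow _

end IsProperEdgeColouring

lemma card_update_colour_class_add_one [Finite G.edgeSet] [DecidableEq G.edgeSet]
    {c : G.edgeSet → α} {e : G.edgeSet} {a b : α} (he : c e = a) (hb : b ≠ a) :
    Nat.card {f : G.edgeSet // Function.update c e b f = a} + 1 =
      Nat.card {f : G.edgeSet // c f = a} := by
  have hclass : {f | Function.update c e b f = a} = {f | c f = a} \ {e} := by
    ext f
    rcases eq_or_ne f e with rfl | hf
    · simp [hb]
    · simp [hf]
  change Nat.card {f | Function.update c e b f = a} + 1 = Nat.card {f | c f = a}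
  rw [Nat.card_coe_set_eq, Nat.card_coe_set_eq, hclass,
    Set.ncard_sdiff_singleton_add_one (show e ∈ {f | c f = a} from he)]

lemma MinimizesColourClass.hasColourAt_or_hasColourAt [Finite V] {c : G.edgeSet → α} {a b : α}
    (hc : IsProperEdgeColouring c) (hmin : MinimizesColourClass c a) {e : G.edgeSet}
    (he : c e = a) {v w : V} (hvw : (e : Sym2 V) = s(v, w)) (hb : b ≠ a) :
    HasColourAt c v b ∨ HasColourAt c w b := by
  by_contra! hmissing
  have hfree : ∀ f : G.edgeSet, Sym2Adj (e : Sym2 V) (f : Sym2 V) → c f ≠ b := by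
    rintro f ⟨-, x, hxe, hxf⟩ rfl
    rw [hvw, Sym2.mem_iff] at hxe
    rcases hxe with rfl | rfl
    exacts [hmissing.1 ⟨f, hxf, rfl⟩, hmissing.2 ⟨f, hxf, rfl⟩]
  have := hmin _ (hc.update hfree)
  rw [← card_update_colour_class_add_one he hb] at this
  omega

section MissingColour

variable [Fintype V] {c : G.edgeSet → α} {μ : V → α}

lemma even_card_missing_ne [DecidableEq α] (hc : IsProperEdgeColouring c)
    (hμ : ∀ v a, a ≠ μ v ↔ HasColourAt c v a) (a : α) :
    Even #(univ.filter (μ · ≠ a)) := by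
  have hends : ∀ e ∈ univ.filter (c · = a),
      #((univ.filter (μ · ≠ a)).filter (· ∈ (e : Sym2 V))) = 2 := by
    intro e he
    rw [← card_filter_mem_edge e]
    congr 1
    ext v
    simp only [mem_filter, mem_univ, true_and, and_iff_right_iff_imp]
    exact fun hv => Ne.symm ((hμ v a).2 ⟨e, hv, (mem_filter.1 he).2⟩)
  rw [hc.card_eq_sum_card_filter_mem a _ fun v hv => (hμ v a).1 (Ne.symm (mem_filter.1 hv).2),
    sum_congr rfl hends]
  simp

lemma even_card_missing_eq_or_eq [DecidableEq α] (hc : IsProperEdgeColouring c)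
    (hμ : ∀ v a, a ≠ μ v ↔ HasColourAt c v a) {j k : α} (hjk : j ≠ k) :
    Even #(univ.filter fun v => μ v = j ∨ μ v = k) := by
  have hdisj : Disjoint (univ.filter (μ · = j)) (univ.filter (μ · = k)) :=
    disjoint_filter.2 fun v _ hj hk => hjk (hj.symm.trans hk)
  have hj := card_filter_add_card_filter_not (s := univ) (μ · = j)
  have hk := card_filter_add_card_filter_not (s := univ) (μ · = k)
  obtain ⟨r, hr⟩ := even_card_missing_ne hc hμ j
  obtain ⟨s, hs⟩ := even_card_missing_ne hc hμ k
  simp only [ne_eq] at hr hs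
  rw [filter_or, card_union_of_disjoint hdisj]
  exact ⟨#(univ : Finset V) - r - s, by omega⟩

end MissingColour

section FourColours

variable [Fintype V] {c : G.edgeSet → Fin 4} {μ : V → Fin 4}

lemma even_card_missing_ne_zero_ne (hc : IsProperEdgeColouring c)
    (hμ : ∀ v a, a ≠ μ v ↔ HasColourAt c v a) {i : Fin 4} (hi : i ≠ 0) :
    Even #(univ.filter fun v => μ v ≠ 0 ∧ μ v ≠ i) := by
  obtain ⟨j, k, hjk, hother⟩ :
      ∃ j k : Fin 4, j ≠ k ∧ ∀ a, (a ≠ 0 ∧ a ≠ i ↔ a = j ∨ a = k) := by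
    revert i; decide
  simpa only [hother] using even_card_missing_eq_or_eq hc hμ hjk

lemma card_filter_mem_of_colour_eq_zero (hc : IsProperEdgeColouring c)
    (hmin : MinimizesColourClass c 0) (hμ : ∀ v a, a ≠ μ v ↔ HasColourAt c v a)
    {e : G.edgeSet} (he : c e = 0) (i : Fin 4) :
    #((univ.filter fun v => μ v ≠ 0 ∧ μ v ≠ i).filter (· ∈ (e : Sym2 V))) =
      if ∀ v ∈ (e : Sym2 V), HasColourAt c v i then 2 else 1 := by
  have hcount : ∀ i a b : Fin 4, a ≠ 0 → b ≠ 0 → a ≠ b →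
      (if a ≠ 0 ∧ a ≠ i then 1 else 0) + (if b ≠ 0 ∧ b ≠ i then 1 else 0) =
        if i ≠ a ∧ i ≠ b then 2 else 1 := by
    decide
  obtain ⟨v, w, hvw⟩ : ∃ v w, (e : Sym2 V) = s(v, w) :=
    Sym2.ind (fun v w => ⟨v, w, rfl⟩) (e : Sym2 V)
  have hvw_ne : v ≠ w := G.ne_of_adj (by rw [← SimpleGraph.mem_edgeSet, ← hvw]; exact e.2)
  have hv0 : μ v ≠ 0 := fun h => (hμ v 0).2 ⟨e, by simp [hvw], he⟩ h.symm
  have hw0 : μ w ≠ 0 := fun h => (hμ w 0).2 ⟨e, by simp [hvw], he⟩ h.symm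
  have hμvw : μ v ≠ μ w := by
    intro h
    rcases hmin.hasColourAt_or_hasColourAt hc he hvw hv0 with h' | h'
    exacts [(hμ v _).2 h' rfl, (hμ w _).2 h' h]
  have hends : (univ.filter fun v => μ v ≠ 0 ∧ μ v ≠ i).filter (· ∈ (e : Sym2 V)) =
      ({v, w} : Finset V).filter fun v => μ v ≠ 0 ∧ μ v ≠ i := by
    ext u
    simp only [mem_filter, mem_univ, true_and, hvw, Sym2.mem_iff, mem_insert, mem_singleton]
    tauto
  rw [hends, card_filter, sum_pair hvw_ne]
  simp only [hvw, Sym2.mem_iff, forall_eq_or_imp, forall_eq, ← hμ]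
  exact hcount i _ _ hv0 hw0 hμvw

lemma card_missing_ne_zero_ne_eq_add (hc : IsProperEdgeColouring c)
    (hmin : MinimizesColourClass c 0) (hμ : ∀ v a, a ≠ μ v ↔ HasColourAt c v a)
    (i : Fin 4) :
    #(univ.filter fun v => μ v ≠ 0 ∧ μ v ≠ i) =
      #(univ.filter (c · = 0)) +
        #(univ.filter fun e => c e = 0 ∧ ∀ v ∈ (e : Sym2 V), HasColourAt c v i) := by
  rw [hc.card_eq_sum_card_filter_mem 0 _ fun v hv => (hμ v 0).1 (Ne.symm (mem_filter.1 hv).2.1),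
    sum_congr rfl fun e he => card_filter_mem_of_colour_eq_zero hc hmin hμ (mem_filter.1 he).2 i,
    ← filter_filter, card_filter _ (univ.filter (c · = 0)),
    card_eq_sum_ones (univ.filter (c · = 0)), ← sum_add_distrib]
  refine sum_congr rfl fun e _ => ?_
  split_ifs <;> rfl

end FourColours

theorem stmt_9_general {V : Type} [Fintype V] (G : SimpleGraph V)
    (hcubic : IsCubic G)
    (c : G.edgeSet → Fin 4)
    (hproper : ∀ e f : G.edgeSet, Sym2Adj (e : Sym2 V) (f : Sym2 V) → c e ≠ c f)
    (hmin : ∀ c' : G.edgeSet → Fin 4,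
      (∀ e f : G.edgeSet, Sym2Adj (e : Sym2 V) (f : Sym2 V) → c' e ≠ c' f) →
      Nat.card {e : G.edgeSet // c e = 0} ≤ Nat.card {e : G.edgeSet // c' e = 0})
    (m : ℕ) (hm : m = Nat.card {e : G.edgeSet // c e = 0})
    (mi : Fin 4 → ℕ)
    (hmi : ∀ i : Fin 4, mi i = Nat.card {e : G.edgeSet // c e = 0 ∧
      ∃ f g : G.edgeSet, f ≠ g ∧ Sym2Adj (e : Sym2 V) (f : Sym2 V) ∧
        Sym2Adj (e : Sym2 V) (g : Sym2 V) ∧ c f = i ∧ c g = i}) :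
    ∀ i : Fin 4, i ≠ 0 → mi i ≡ m [MOD 2] := by
  intro i hi
  choose μ hμ using
    IsProperEdgeColouring.exists_missing_colour (Nat.card_fin 4) hcubic hproper
  have hm' : m = #(univ.filter (c · = 0)) := by
    rw [hm, Nat.card_eq_fintype_card, Fintype.card_subtype]
  have hmi' :
      mi i = #(univ.filter fun e => c e = 0 ∧ ∀ v ∈ (e : Sym2 V), HasColourAt c v i) := by
    rw [hmi, Nat.card_eq_fintype_card, Fintype.card_subtype]
    refine congrArg card (filter_congr fun e _ => and_congr_right fun he => ?_)
    exact IsProperEdgeColouring.exists_two_adj_iff hproper e (he.trans_ne hi.symm)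
  obtain ⟨r, hr⟩ := even_card_missing_ne_zero_ne hproper hμ hi
  have hcount := card_missing_ne_zero_ne_eq_add hproper hmin hμ i
  rw [Nat.ModEq]
  omega

/-- in a minimum proper 4-edge-colouring of a connected cubic graph
(minimizing the number of edges coloured 0), the number `m_i` of edges coloured 0 adjacent
to two edges coloured `i` satisfies `m_i ≡ m (mod 2)` for each nonzero colour `i`,
where `m` is the number of edges coloured 0. -/
theorem stmt_9 {V : Type} [Fintype V] (G : SimpleGraph V)
    (hconn : G.Connected) (hcubic : IsCubic G)
    (c : G.edgeSet → Fin 4)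
    (hproper : ∀ e f : G.edgeSet, Sym2Adj (e : Sym2 V) (f : Sym2 V) → c e ≠ c f)
    (hmin : ∀ c' : G.edgeSet → Fin 4,
      (∀ e f : G.edgeSet, Sym2Adj (e : Sym2 V) (f : Sym2 V) → c' e ≠ c' f) →
      Nat.card {e : G.edgeSet // c e = 0} ≤ Nat.card {e : G.edgeSet // c' e = 0})
    (m : ℕ) (hm : m = Nat.card {e : G.edgeSet // c e = 0})
    (mi : Fin 4 → ℕ)
    (hmi : ∀ i : Fin 4, mi i = Nat.card {e : G.edgeSet // c e = 0 ∧
      ∃ f g : G.edgeSet, f ≠ g ∧ Sym2Adj (e : Sym2 V) (f : Sym2 V) ∧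
        Sym2Adj (e : Sym2 V) (g : Sym2 V) ∧ c f = i ∧ c g = i}) :
    ∀ i : Fin 4, i ≠ 0 → mi i ≡ m [MOD 2] :=
  stmt_9_general G hcubic c hproper hmin m hm mi hmi
end

section
/- Let G be a bridgeless cubic graph. Then ρ(G) = 2 if and only if ω(G) = 2. -/
open SimpleGraph

namespace Work
variable {V : Type} [Fintype V]
set_option linter.unusedSectionVars false

noncomputable def deg (K : SimpleGraph V) (v : V) : ℕ := (K.neighborSet v).ncard

lemma natCard_nb (K : SimpleGraph V) (v : V) : Nat.card (K.neighborSet v) = deg K v :=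
  Nat.card_coe_set_eq _

lemma deg_eq_degree (K : SimpleGraph V) [DecidableRel K.Adj] (v : V) : deg K v = K.degree v := by
  rw [deg, ← card_neighborSet_eq_degree, ← Nat.card_eq_fintype_card, Nat.card_coe_set_eq]

lemma even_card_of_involution : ∀ (n : ℕ) (s : Finset V) (f : V → V), s.card = n →
    (∀ v ∈ s, f v ∈ s) → (∀ v ∈ s, f (f v) = v) → (∀ v ∈ s, f v ≠ v) → Even s.card := by
  intro n
  induction n using Nat.strong_induction_on with
  | _ n ih =>
    intro s f hcard h1 h2 h3
    classical
    rcases s.eq_empty_or_nonempty with rfl | ⟨x, hx⟩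
    · simp
    · have hfx : f x ∈ s := h1 x hx
      have hxfx : x ≠ f x := fun h => (h3 x hx) h.symm
      set t := s \ {x, f x} with ht
      have hsub : {x, f x} ⊆ s := by
        intro y hy
        simp only [Finset.mem_insert, Finset.mem_singleton] at hy
        rcases hy with rfl | rfl <;> assumption
      have hcardt : t.card = s.card - 2 := by
        rw [ht, Finset.card_sdiff_of_subset hsub, Finset.card_pair hxfx]
      have h2le : 2 ≤ s.card := by
        calc 2 = ({x, f x} : Finset V).card := (Finset.card_pair hxfx).symm
        _ ≤ s.card := Finset.card_le_card hsub
      have h1' : ∀ v ∈ t, f v ∈ t := by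
        intro v hv
        simp only [ht, Finset.mem_sdiff, Finset.mem_insert, Finset.mem_singleton] at hv ⊢
        obtain ⟨hvs, hvne⟩ := hv
        push_neg at hvne
        refine ⟨h1 v hvs, ?_⟩
        push_neg
        refine ⟨?_, ?_⟩
        · intro h; exact hvne.2 (by rw [← h2 v hvs, h])
        · intro h
          exact hvne.1 (by rw [← h2 v hvs, h, h2 x hx])
      have h2' : ∀ v ∈ t, f (f v) = v := fun v hv => h2 v (Finset.mem_sdiff.mp hv).1
      have h3' : ∀ v ∈ t, f v ≠ v := fun v hv => h3 v (Finset.mem_sdiff.mp hv).1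
      have hlt : t.card < n := by omega
      have := ih t.card hlt t f rfl h1' h2' h3'
      have : Even (t.card + 2) := by rcases this with ⟨r, hr⟩; exact ⟨r + 1, by omega⟩
      have hs : s.card = t.card + 2 := by omega
      rw [hs]; exact this

lemma even_ncard_of_involution (s : Set V) (f : V → V)
    (h1 : ∀ v ∈ s, f v ∈ s) (h2 : ∀ v ∈ s, f (f v) = v) (h3 : ∀ v ∈ s, f v ≠ v) :
    Even s.ncard := by
  classical
  rw [Set.ncard_eq_toFinset_card' s]
  exact even_card_of_involution _ _ f rfl
    (fun v hv => Set.mem_toFinset.mpr (h1 v (Set.mem_toFinset.mp hv)))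
    (fun v hv => h2 v (Set.mem_toFinset.mp hv))
    (fun v hv => h3 v (Set.mem_toFinset.mp hv))

lemma even_sum_deg (K : SimpleGraph V) : Even (∑ v, deg K v) := by
  classical
  have : ∑ v, deg K v = ∑ v, K.degree v := by
    apply Finset.sum_congr rfl; intro v _; exact deg_eq_degree K v
  rw [this, sum_degrees_eq_twice_card_edges]
  exact ⟨_, two_mul _⟩

lemma walk_supp_closed {K K' : SimpleGraph V} (C' : K'.ConnectedComponent)
    (hcl : ∀ z ∈ C'.supp, ∀ w, K.Adj z w → w ∈ C'.supp) :
    ∀ {a b : V}, K.Walk a b → a ∈ C'.supp → b ∈ C'.supp := by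
  intro a b p
  induction p with
  | nil => exact id
  | cons h q ih => intro ha; exact ih (hcl _ ha _ h)

lemma supp_closed_eq_comp {K K' : SimpleGraph V} (hle : K' ≤ K) (C' : K'.ConnectedComponent)
    (hcl : ∀ z ∈ C'.supp, ∀ w, K.Adj z w → w ∈ C'.supp) :
    ∃ C : K.ConnectedComponent, C.supp = C'.supp := by
  obtain ⟨v, rfl⟩ := C'.exists_rep
  have hv : v ∈ (K'.connectedComponentMk v).supp := by
    rw [ConnectedComponent.mem_supp_iff]
  refine ⟨K.connectedComponentMk v, ?_⟩
  ext w
  rw [ConnectedComponent.mem_supp_iff, ConnectedComponent.eq]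
  constructor
  · intro h
    obtain ⟨p⟩ := h.symm
    exact walk_supp_closed _ hcl p hv
  · intro hw
    change K'.connectedComponentMk w = K'.connectedComponentMk v at hw
    exact (ConnectedComponent.eq.mp hw).mono hle

end Work

namespace Work
variable {V : Type} [Fintype V]
set_option linter.unusedSectionVars false
attribute [local instance] Classical.propDecidable

lemma adj_mem_supp {K : SimpleGraph V} {C : K.ConnectedComponent} {v w : V}
    (hv : v ∈ C.supp) (h : K.Adj v w) : w ∈ C.supp := by
  rw [ConnectedComponent.mem_supp_iff] at hv ⊢
  rw [← hv]
  exact (ConnectedComponent.connectedComponentMk_eq_of_adj h).symm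

lemma nb_delete_not_endpoint (K : SimpleGraph V) {x y : V} (z : V) (hz : z ≠ x) (hz' : z ≠ y) :
    (K.deleteEdges {s(x,y)}).neighborSet z = K.neighborSet z := by
  ext w
  simp only [mem_neighborSet, deleteEdges_adj, Set.mem_singleton_iff]
  constructor
  · rintro ⟨h, -⟩; exact h
  · intro h
    refine ⟨h, ?_⟩
    intro he
    rw [Sym2.eq_iff] at he
    rcases he with ⟨h1, -⟩ | ⟨h1, -⟩
    · exact hz h1
    · exact hz' h1

lemma nb_delete_endpoint (K : SimpleGraph V) {x y : V} (hxy : x ≠ y) :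
    (K.deleteEdges {s(x,y)}).neighborSet x = K.neighborSet x \ {y} := by
  ext w
  simp only [mem_neighborSet, deleteEdges_adj, Set.mem_diff, Set.mem_singleton_iff, Sym2.eq_iff]
  constructor
  · rintro ⟨h, hne⟩
    refine ⟨h, fun hw => hne ?_⟩
    subst hw
    simp
  · rintro ⟨h, hw⟩
    refine ⟨h, ?_⟩
    intro hor
    rcases hor with ⟨-, h2⟩ | ⟨h1, -⟩
    · exact hw h2
    · exact hxy h1

lemma deg_delete_endpoint (K : SimpleGraph V) {x y : V} (hxy : K.Adj x y) :
    deg (K.deleteEdges {s(x,y)}) x = deg K x - 1 := by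
  rw [deg, nb_delete_endpoint K hxy.ne,
    Set.ncard_diff_singleton_of_mem (show y ∈ K.neighborSet x from hxy)]
  rfl

lemma deg_delete_endpoint' (K : SimpleGraph V) {x y : V} (hxy : K.Adj x y) :
    deg (K.deleteEdges {s(x,y)}) y = deg K y - 1 := by
  have : ({s(x,y)} : Set (Sym2 V)) = {s(y,x)} := by rw [Sym2.eq_swap]
  rw [this]
  exact deg_delete_endpoint K hxy.symm

lemma deg_mono {K K' : SimpleGraph V} (h : K' ≤ K) (v : V) : deg K' v ≤ deg K v :=
  Set.ncard_le_ncard (fun _ hw => h hw) (Set.toFinite _)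

lemma even_sum_deg_supp (K : SimpleGraph V) (C : K.ConnectedComponent) :
    Even (∑ v ∈ C.supp.toFinset, deg K v) := by
  classical
  let KC : SimpleGraph V :=
    { Adj := fun a b => K.Adj a b ∧ a ∈ C.supp ∧ b ∈ C.supp
      symm := by constructor; rintro a b ⟨h, ha, hb⟩; exact ⟨h.symm, hb, ha⟩
      loopless := by constructor; rintro a ⟨h, -⟩; exact h.ne rfl }
  have hnb : ∀ v ∈ C.supp, KC.neighborSet v = K.neighborSet v := by
    intro v hv
    ext w
    simp only [mem_neighborSet]
    constructor
    · rintro ⟨h, -⟩; exact h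
    · intro h; exact ⟨h, hv, adj_mem_supp hv h⟩
  have hnb0 : ∀ v, v ∉ C.supp → KC.neighborSet v = ∅ := by
    intro v hv
    ext w
    simp only [mem_neighborSet, Set.mem_empty_iff_false, iff_false]
    rintro ⟨-, h, -⟩; exact hv h
  have h1 : ∑ v ∈ C.supp.toFinset, deg K v = ∑ v ∈ C.supp.toFinset, deg KC v := by
    apply Finset.sum_congr rfl
    intro v hv
    rw [deg, deg, hnb v (Set.mem_toFinset.mp hv)]
  have h2 : ∑ v ∈ C.supp.toFinset, deg KC v = ∑ v, deg KC v := by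
    apply Finset.sum_subset (Finset.subset_univ _)
    intro v _ hv
    rw [deg, hnb0 v (fun h => hv (Set.mem_toFinset.mpr h)), Set.ncard_empty]
  rw [h1, h2]
  exact even_sum_deg KC

lemma edge_at {K : SimpleGraph V} {e : Sym2 V} (he : e ∈ K.edgeSet) {z : V} (hz : z ∈ e) :
    ∃ w, K.Adj z w ∧ e = s(z, w) := by
  refine ⟨Sym2.Mem.other hz, ?_, (Sym2.other_spec hz).symm⟩
  rw [← mem_edgeSet, Sym2.other_spec hz]
  exact he

lemma two_le_deg_of_two_edges {K : SimpleGraph V} {e f : Sym2 V} (he : e ∈ K.edgeSet)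
    (hf : f ∈ K.edgeSet) (hef : e ≠ f) {z : V} (hze : z ∈ e) (hzf : z ∈ f) : 2 ≤ deg K z := by
  obtain ⟨w1, hw1, rfl⟩ := edge_at he hze
  obtain ⟨w2, hw2, rfl⟩ := edge_at hf hzf
  have hww : w1 ≠ w2 := fun h => hef (by rw [h])
  calc 2 = ({w1, w2} : Set V).ncard := (Set.ncard_pair hww).symm
  _ ≤ deg K z := Set.ncard_le_ncard (by
      intro u hu
      rcases hu with rfl | hu
      · exact hw1
      · rcases hu with rfl; exact hw2) (Set.toFinite _)

lemma deg_pos_of_edge {K : SimpleGraph V} {e : Sym2 V} (he : e ∈ K.edgeSet) {z : V}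
    (hz : z ∈ e) : 1 ≤ deg K z := by
  obtain ⟨w, hw, -⟩ := edge_at he hz
  have : ({w} : Set V).ncard ≤ deg K z :=
    Set.ncard_le_ncard (by intro u hu; rcases hu with rfl; exact hw) (Set.toFinite _)
  simpa using this

lemma eq_of_reachable_deg_zero {K : SimpleGraph V} {z : V} (h : deg K z = 0) {w : V}
    (hr : K.Reachable z w) : w = z := by
  have hnb : K.neighborSet z = ∅ := by
    rw [deg] at h
    exact (Set.ncard_eq_zero (Set.toFinite _)).mp h
  obtain ⟨p⟩ := hr
  cases p with
  | nil => rfl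
  | cons hadj q =>
    exfalso
    have : _ ∈ K.neighborSet z := hadj
    rw [hnb] at this
    exact this

end Work

namespace Work
variable {V : Type} [Fintype V]
set_option linter.unusedSectionVars false
attribute [local instance] Classical.propDecidable

/-- Parity of the set of vertices of a component covered by a set `P` of edges which is a
partial matching (any vertex is in at most one edge of `P`). -/
lemma even_ncard_covered (K' : SimpleGraph V) (P : Set (Sym2 V)) (hPE : P ⊆ K'.edgeSet)
    (huniq : ∀ (z : V) (e f : Sym2 V), e ∈ P → f ∈ P → z ∈ e → z ∈ f → e = f)
    (C' : K'.ConnectedComponent) :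
    Even {z | z ∈ C'.supp ∧ ∃ f ∈ P, z ∈ f}.ncard := by
  classical
  set A : Set V := {z | z ∈ C'.supp ∧ ∃ f ∈ P, z ∈ f} with hA
  let g : V → V := fun z => if h : ∃ f ∈ P, z ∈ f then Sym2.Mem.other h.choose_spec.2 else z
  have hg_edge : ∀ (z : V) (h : ∃ f ∈ P, z ∈ f), s(z, g z) = h.choose := by
    intro z h
    simp only [g, dif_pos h]
    exact Sym2.other_spec _
  have hg_adj : ∀ (z : V) (h : ∃ f ∈ P, z ∈ f), K'.Adj z (g z) := by
    intro z h
    rw [← mem_edgeSet, hg_edge z h]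
    exact hPE h.choose_spec.1
  have hg_mem : ∀ (z : V) (h : ∃ f ∈ P, z ∈ f), ∃ f ∈ P, (g z) ∈ f := by
    intro z h
    refine ⟨h.choose, h.choose_spec.1, ?_⟩
    rw [← hg_edge z h]
    exact Sym2.mem_mk_right _ _
  apply even_ncard_of_involution A g
  · rintro z ⟨hzs, hz⟩
    exact ⟨adj_mem_supp hzs (hg_adj z hz), hg_mem z hz⟩
  · rintro z ⟨hzs, hz⟩
    have hw : ∃ f ∈ P, (g z) ∈ f := hg_mem z hz
    have hee : hw.choose = hz.choose :=
      huniq (g z) _ _ hw.choose_spec.1 hz.choose_spec.1 hw.choose_spec.2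
        (by rw [← hg_edge z hz]; exact Sym2.mem_mk_right _ _)
    have h1 : s(g z, g (g z)) = hz.choose := by rw [hg_edge (g z) hw, hee]
    have h2 : s(g z, z) = hz.choose := by rw [← hg_edge z hz, Sym2.eq_swap]
    rw [← h2] at h1
    exact Sym2.congr_right.mp h1
  · rintro z ⟨hzs, hz⟩
    have hdiag : ¬ (hz.choose : Sym2 V).IsDiag :=
      K'.not_isDiag_of_mem_edgeSet (hPE hz.choose_spec.1)
    simp only [g, dif_pos hz]
    exact Sym2.other_ne hdiag _

lemma deg_delete_not_endpoint (K : SimpleGraph V) {x y : V} (z : V) (hz : z ≠ x) (hz' : z ≠ y) :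
    deg (K.deleteEdges {s(x,y)}) z = deg K z := by
  rw [deg, nb_delete_not_endpoint K z hz hz']
  rfl

lemma surgery {K : SimpleGraph V} {x y : V} (hxy : K.Adj x y)
    (hdeg : ∀ v, deg K v ≤ 2)
    (heven : ∀ C : K.ConnectedComponent, (∀ v ∈ C.supp, deg K v = 2) → Even C.supp.ncard) :
    ∀ C' : (K.deleteEdges {s(x,y)}).ConnectedComponent,
      (∀ v ∈ C'.supp, deg (K.deleteEdges {s(x,y)}) v = 2) → Even C'.supp.ncard := by
  intro C' h2
  have hxs : x ∉ C'.supp := by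
    intro hx
    have h := h2 x hx
    rw [deg_delete_endpoint K hxy] at h
    have := hdeg x
    omega
  have hys : y ∉ C'.supp := by
    intro hy
    have h := h2 y hy
    rw [deg_delete_endpoint' K hxy] at h
    have := hdeg y
    omega
  have hcl : ∀ z ∈ C'.supp, ∀ w, K.Adj z w → w ∈ C'.supp := by
    intro z hz w hzw
    have hne : s(z, w) ≠ s(x, y) := by
      intro h
      have : z ∈ s(x,y) := h ▸ Sym2.mem_mk_left z w
      rw [Sym2.mem_iff] at this
      rcases this with rfl | rfl
      · exact hxs hz
      · exact hys hz
    have : (K.deleteEdges {s(x,y)}).Adj z w := by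
      rw [deleteEdges_adj]
      exact ⟨hzw, by simpa using hne⟩
    exact adj_mem_supp hz this
  obtain ⟨C, hC⟩ := supp_closed_eq_comp (K.deleteEdges_le _) C' hcl
  have := heven C (by
    intro v hv
    rw [hC] at hv
    have hvx : v ≠ x := fun h => hxs (h ▸ hv)
    have hvy : v ≠ y := fun h => hys (h ▸ hv)
    rw [← deg_delete_not_endpoint K v hvx hvy]
    exact h2 v hv)
  rwa [hC] at this

def IsGoodMatching (K : SimpleGraph V) (M : Set (Sym2 V)) : Prop :=
  M ⊆ K.edgeSet ∧ (∀ (z : V), ∀ e ∈ M, ∀ f ∈ M, z ∈ e → z ∈ f → e = f) ∧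
    (∀ v : V, deg K v = 2 → ∃ e ∈ M, v ∈ e)

end Work

namespace Work
variable {V : Type} [Fintype V]
set_option linter.unusedSectionVars false
attribute [local instance] Classical.propDecidable

lemma exists_matching : ∀ (n : ℕ) (K : SimpleGraph V), K.edgeSet.ncard = n →
    (∀ v, deg K v ≤ 2) →
    (∀ C : K.ConnectedComponent, (∀ v ∈ C.supp, deg K v = 2) → Even C.supp.ncard) →
    ∃ M, IsGoodMatching K M := by
  intro n
  induction n using Nat.strong_induction_on with
  | _ n ih =>
  intro K hn hdeg heven
  classical
  by_cases hcase : ∃ v, deg K v = 1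
  -- Case A : a vertex of degree one
  · obtain ⟨v, hv1⟩ := hcase
    obtain ⟨w, hw⟩ := Set.ncard_eq_one.mp hv1
    have hvw : K.Adj v w := by
      have : w ∈ K.neighborSet v := by rw [hw]; rfl
      exact this
    have hmemE : s(v, w) ∈ K.edgeSet := K.mem_edgeSet.mpr hvw
    have hnpos : 1 ≤ n := by
      rw [← hn]
      exact le_trans (by simpa using (Set.ncard_le_ncard
        (by intro u hu; rcases hu with rfl; exact hmemE : ({s(v,w)} : Set (Sym2 V)) ⊆ K.edgeSet)
        (Set.toFinite _))) le_rfl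
    set K' := K.deleteEdges {s(v,w)} with hK'
    have hsub : K'.edgeSet ⊆ K.edgeSet := by
      rw [hK', edgeSet_deleteEdges]; exact Set.diff_subset
    have hEcard : K'.edgeSet.ncard = n - 1 := by
      rw [hK', edgeSet_deleteEdges, Set.ncard_diff_singleton_of_mem hmemE, hn]
    obtain ⟨M', hM'sub, hM'uniq, hM'cov⟩ := ih (n-1) (by omega) K' hEcard
      (fun z => le_trans (deg_mono (K.deleteEdges_le _) z) (hdeg z))
      (surgery hvw hdeg heven)
    have hdegv' : deg K' v = 0 := by rw [hK', deg_delete_endpoint K hvw, hv1]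
    by_cases hwcov : deg K w = 2 ∧ ¬∃ f ∈ M', w ∈ f
    · refine ⟨insert s(v,w) M', ?_, ?_, ?_⟩
      · exact Set.insert_subset hmemE (hM'sub.trans hsub)
      · intro z e heI f hfI hze hzf
        rcases Set.mem_insert_iff.mp heI with rfl | heM <;>
          rcases Set.mem_insert_iff.mp hfI with rfl | hfM
        · rfl
        · exfalso
          rw [Sym2.mem_iff] at hze
          rcases hze with rfl | rfl
          · have := deg_pos_of_edge (hM'sub hfM) hzf
            omega
          · exact hwcov.2 ⟨f, hfM, hzf⟩
        · exfalso
          rw [Sym2.mem_iff] at hzf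
          rcases hzf with rfl | rfl
          · have := deg_pos_of_edge (hM'sub heM) hze
            omega
          · exact hwcov.2 ⟨e, heM, hze⟩
        · exact hM'uniq z e heM f hfM hze hzf
      · intro z hz2
        by_cases hzv : z = v
        · subst hzv; omega
        by_cases hzw : z = w
        · exact ⟨s(v,w), Set.mem_insert _ _, by rw [hzw]; exact Sym2.mem_mk_right v w⟩
        · have : deg K' z = 2 := by
            rw [hK', deg_delete_not_endpoint K z hzv hzw]; exact hz2
          obtain ⟨f, hf, hzf⟩ := hM'cov z this
          exact ⟨f, Set.mem_insert_of_mem _ hf, hzf⟩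
    · refine ⟨M', hM'sub.trans hsub, hM'uniq, ?_⟩
      intro z hz2
      by_cases hzv : z = v
      · subst hzv; omega
      by_cases hzw : z = w
      · subst hzw
        push_neg at hwcov
        obtain ⟨f, hf, hzf⟩ := hwcov hz2
        exact ⟨f, hf, hzf⟩
      · exact hM'cov z (by rw [hK', deg_delete_not_endpoint K z hzv hzw]; exact hz2)
  -- Case B : all degrees are 0 or 2
  · push_neg at hcase
    by_cases hE : K.edgeSet = ∅
    · refine ⟨∅, by simp, by simp, ?_⟩
      intro z hz2
      exfalso
      have : K.neighborSet z = ∅ := by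
        by_contra hne
        obtain ⟨u, hu⟩ := Set.nonempty_iff_ne_empty.mpr hne
        have : s(z, u) ∈ K.edgeSet := K.mem_edgeSet.mpr hu
        rw [hE] at this
        exact this
      rw [deg, this, Set.ncard_empty] at hz2
      omega
    obtain ⟨e, he⟩ := Set.nonempty_iff_ne_empty.mpr hE
    obtain ⟨x, y, rfl, hxy⟩ := Sym2.ind (f := fun e => e ∈ K.edgeSet →
        ∃ x y, s(x,y) = e ∧ K.Adj x y)
      (fun x y h => ⟨x, y, rfl, K.mem_edgeSet.mp h⟩) e he
    have hdx : deg K x = 2 := by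
      have := deg_pos_of_edge he (Sym2.mem_mk_left x y)
      have := hdeg x; have := hcase x; omega
    have hdy : deg K y = 2 := by
      have := deg_pos_of_edge he (Sym2.mem_mk_right x y)
      have := hdeg y; have := hcase y; omega
    have hnpos : 1 ≤ n := by
      rw [← hn]
      have : ({s(x,y)} : Set (Sym2 V)) ⊆ K.edgeSet := by
        intro u hu; rcases hu with rfl; exact he
      simpa using Set.ncard_le_ncard this (Set.toFinite _)
    set K' := K.deleteEdges {s(x,y)} with hK'
    have hsub : K'.edgeSet ⊆ K.edgeSet := by
      rw [hK', edgeSet_deleteEdges]; exact Set.diff_subset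
    have hEcard : K'.edgeSet.ncard = n - 1 := by
      rw [hK', edgeSet_deleteEdges, Set.ncard_diff_singleton_of_mem he, hn]
    obtain ⟨M', hM'sub, hM'uniq, hM'cov⟩ := ih (n-1) (by omega) K' hEcard
      (fun z => le_trans (deg_mono (K.deleteEdges_le _) z) (hdeg z))
      (surgery hxy hdeg heven)
    have hdegx' : deg K' x = 1 := by rw [hK', deg_delete_endpoint K hxy, hdx]
    have hdegy' : deg K' y = 1 := by rw [hK', deg_delete_endpoint' K hxy, hdy]
    set C' := K'.connectedComponentMk x with hC'def
    have hxC : x ∈ C'.supp := by rw [ConnectedComponent.mem_supp_iff]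
    -- any vertex in C'.supp has positive K-degree
    have hpos : ∀ z ∈ C'.supp, deg K z ≠ 0 := by
      intro z hz h0
      have h0' : deg K' z = 0 :=
        Nat.le_antisymm (h0 ▸ deg_mono (K.deleteEdges_le _) z) (Nat.zero_le _)
      have hr : K'.Reachable x z :=
        (ConnectedComponent.eq.mp (ConnectedComponent.mem_supp_iff _ _ |>.mp hz)).symm
      have := eq_of_reachable_deg_zero h0' hr.symm
      subst this
      omega
    have hyC : y ∈ C'.supp := by
      by_contra hy
      have hpar := even_sum_deg_supp K' C'
      have hxmem : x ∈ C'.supp.toFinset := Set.mem_toFinset.mpr hxC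
      have hpar : Even (∑ v ∈ C'.supp.toFinset, deg K' v) := by convert hpar
      rw [← Finset.add_sum_erase _ _ hxmem] at hpar
      have hrest : Even (∑ z ∈ C'.supp.toFinset.erase x, deg K' z) := by
        apply Finset.even_sum
        intro z hz
        obtain ⟨hzx, hzs⟩ := Finset.mem_erase.mp hz
        have hzsupp := Set.mem_toFinset.mp hzs
        have hzy : z ≠ y := fun h => hy (h ▸ hzsupp)
        rw [hK', deg_delete_not_endpoint K z hzx hzy]
        have h1 := hcase z
        have h2 := hdeg z
        have h3 := hpos z hzsupp
        have : deg K z = 2 := by omega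
        rw [this]
        exact ⟨1, rfl⟩
      rw [hdegx'] at hpar
      obtain ⟨a, ha⟩ := hpar
      obtain ⟨b, hb⟩ := hrest
      omega
    have hcl : ∀ z ∈ C'.supp, ∀ u, K.Adj z u → u ∈ C'.supp := by
      intro z hz u hzu
      by_cases hne : s(z,u) = s(x,y)
      · have : u ∈ s(x,y) := hne ▸ Sym2.mem_mk_right z u
        rw [Sym2.mem_iff] at this
        rcases this with rfl | rfl
        · exact hxC
        · exact hyC
      · exact adj_mem_supp hz (by rw [hK', deleteEdges_adj]; exact ⟨hzu, by simpa using hne⟩)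
    obtain ⟨C, hC⟩ := supp_closed_eq_comp (K.deleteEdges_le _) C' hcl
    have hCeven : Even C'.supp.ncard := by
      rw [← hC]
      apply heven C
      intro u hu
      have hu' : u ∈ C'.supp := hC ▸ hu
      have h1 := hcase u
      have h2 := hdeg u
      have h3 := hpos u hu'
      omega
    have hAeven := even_ncard_covered K' M' hM'sub
      (fun z e f heP hfP hze hzf => hM'uniq z e heP f hfP hze hzf) C'
    set A : Set V := {z | z ∈ C'.supp ∧ ∃ f ∈ M', z ∈ f} with hAdef
    have hAsub : A ⊆ C'.supp := fun z hz => hz.1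
    have hUsub : C'.supp \ A ⊆ ({x, y} : Set V) := by
      rintro z ⟨hzs, hzA⟩
      by_contra hzxy
      rw [Set.mem_insert_iff, Set.mem_singleton_iff] at hzxy
      push_neg at hzxy
      have hd2 : deg K' z = 2 := by
        rw [hK', deg_delete_not_endpoint K z hzxy.1 hzxy.2]
        have h1 := hcase z
        have h2 := hdeg z
        have h3 := hpos z hzs
        omega
      exact hzA ⟨hzs, hM'cov z hd2⟩
    have hUeven : Even (C'.supp \ A).ncard := by
      rw [Set.ncard_diff hAsub (Set.toFinite _)]
      obtain ⟨p, hp⟩ := hCeven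
      obtain ⟨q, hq⟩ := hAeven
      have hle : A.ncard ≤ C'.supp.ncard := Set.ncard_le_ncard hAsub (Set.toFinite _)
      exact ⟨p - q, by omega⟩
    have hU2 : (C'.supp \ A).ncard ≤ 2 := by
      have := Set.ncard_le_ncard hUsub (Set.toFinite _)
      rwa [Set.ncard_pair hxy.ne] at this
    have hU02 : (C'.supp \ A).ncard = 0 ∨ (C'.supp \ A).ncard = 2 := by
      obtain ⟨r, hr⟩ := hUeven
      omega
    rcases hU02 with hU0 | hU2'
    · -- both endpoints covered : M' suffices
      have hUempty : C'.supp \ A = ∅ := (Set.ncard_eq_zero (Set.toFinite _)).mp hU0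
      have hxcov : x ∈ A := by
        by_contra h
        have : x ∈ C'.supp \ A := ⟨hxC, h⟩
        rw [hUempty] at this
        exact this
      have hycov : y ∈ A := by
        by_contra h
        have : y ∈ C'.supp \ A := ⟨hyC, h⟩
        rw [hUempty] at this
        exact this
      refine ⟨M', hM'sub.trans hsub, hM'uniq, ?_⟩
      intro z hz2
      by_cases hzx : z = x
      · subst hzx; exact hxcov.2
      by_cases hzy : z = y
      · subst hzy; exact hycov.2
      · exact hM'cov z (by rw [hK', deg_delete_not_endpoint K z hzx hzy]; exact hz2)
    · -- both endpoints uncovered : add the edge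
      have hUeq : C'.supp \ A = {x, y} :=
        Set.eq_of_subset_of_ncard_le hUsub (by rw [Set.ncard_pair hxy.ne, hU2']) (Set.toFinite _)
      have hxunc : x ∉ A := by
        have : x ∈ C'.supp \ A := by rw [hUeq]; exact Set.mem_insert _ _
        exact this.2
      have hyunc : y ∉ A := by
        have : y ∈ C'.supp \ A := by rw [hUeq]; exact Set.mem_insert_of_mem _ rfl
        exact this.2
      refine ⟨insert s(x,y) M', Set.insert_subset he (hM'sub.trans hsub), ?_, ?_⟩
      · intro z e heM f hfM hze hzf
        rcases Set.mem_insert_iff.mp heM with rfl | heM' <;>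
          rcases Set.mem_insert_iff.mp hfM with rfl | hfM'
        · rfl
        · exfalso
          rw [Sym2.mem_iff] at hze
          rcases hze with rfl | rfl
          · exact hxunc ⟨hxC, f, hfM', hzf⟩
          · exact hyunc ⟨hyC, f, hfM', hzf⟩
        · exfalso
          rw [Sym2.mem_iff] at hzf
          rcases hzf with rfl | rfl
          · exact hxunc ⟨hxC, e, heM', hze⟩
          · exact hyunc ⟨hyC, e, heM', hze⟩
        · exact hM'uniq z e heM' f hfM' hze hzf
      · intro z hz2
        by_cases hzx : z = x
        · subst hzx; exact ⟨s(z,y), Set.mem_insert _ _, Sym2.mem_mk_left _ _⟩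
        by_cases hzy : z = y
        · subst hzy; exact ⟨s(x,z), Set.mem_insert _ _, Sym2.mem_mk_right _ _⟩
        · obtain ⟨f, hf, hzf⟩ := hM'cov z
            (by rw [hK', deg_delete_not_endpoint K z hzx hzy]; exact hz2)
          exact ⟨f, Set.mem_insert_of_mem _ hf, hzf⟩

end Work

namespace Work
variable {V : Type} [Fintype V]
set_option linter.unusedSectionVars false
attribute [local instance] Classical.propDecidable

def Proper {K : SimpleGraph V} (c : K.edgeSet → Fin 3) : Prop :=
  ∀ e f : K.edgeSet, Sym2Adj (e : Sym2 V) (f : Sym2 V) → c e ≠ c f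

lemma unique_colour_edge {K : SimpleGraph V} {c : K.edgeSet → Fin 3} (hc : Proper c) {z : V}
    {e f : K.edgeSet} (hze : z ∈ (e : Sym2 V)) (hzf : z ∈ (f : Sym2 V)) (hcol : c e = c f) :
    e = f := by
  by_contra hne
  exact hc e f ⟨fun h => hne (Subtype.ext h), z, hze, hzf⟩ hcol

def Sees (K : SimpleGraph V) (c : K.edgeSet → Fin 3) (v : V) (i : Fin 3) : Prop :=
  ∃ e : K.edgeSet, v ∈ (e : Sym2 V) ∧ c e = i

lemma three_le_deg_of_three_edges {K : SimpleGraph V} {e f g : Sym2 V} (he : e ∈ K.edgeSet)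
    (hf : f ∈ K.edgeSet) (hg : g ∈ K.edgeSet) (hef : e ≠ f) (heg : e ≠ g) (hfg : f ≠ g)
    {z : V} (hze : z ∈ e) (hzf : z ∈ f) (hzg : z ∈ g) : 3 ≤ deg K z := by
  obtain ⟨w1, hw1, rfl⟩ := edge_at he hze
  obtain ⟨w2, hw2, rfl⟩ := edge_at hf hzf
  obtain ⟨w3, hw3, rfl⟩ := edge_at hg hzg
  have h12 : w1 ≠ w2 := fun h => hef (by rw [h])
  have h13 : w1 ≠ w3 := fun h => heg (by rw [h])
  have h23 : w2 ≠ w3 := fun h => hfg (by rw [h])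
  have hsub : ({w1, w2, w3} : Set V) ⊆ K.neighborSet z := by
    intro u hu
    rcases hu with rfl | hu
    · exact hw1
    rcases hu with rfl | hu
    · exact hw2
    rcases hu with rfl
    exact hw3
  have : ({w1, w2, w3} : Set V).ncard = 3 := by
    rw [Set.ncard_insert_of_notMem (by simp [h12, h13]) (Set.toFinite _),
      Set.ncard_pair h23]
  calc 3 = ({w1, w2, w3} : Set V).ncard := this.symm
  _ ≤ deg K z := Set.ncard_le_ncard hsub (Set.toFinite _)

lemma card_sees {K : SimpleGraph V} {c : K.edgeSet → Fin 3} (hc : Proper c) (v : V) :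
    (Finset.univ.filter (fun i => Sees K c v i)).card = deg K v := by
  classical
  have hdeg : deg K v = (K.neighborSet v).toFinset.card := Set.ncard_eq_toFinset_card' _
  rw [hdeg]
  symm
  refine Finset.card_bij
    (fun w hw => c ⟨s(v, w), K.mem_edgeSet.mpr (Set.mem_toFinset.mp hw)⟩) ?_ ?_ ?_
  · intro w hw
    rw [Finset.mem_filter]
    exact ⟨Finset.mem_univ _, ⟨_, Sym2.mem_mk_left _ _, rfl⟩⟩
  · intro w1 hw1 w2 hw2 heq
    have := unique_colour_edge hc (Sym2.mem_mk_left v w1) (Sym2.mem_mk_left v w2) heq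
    have hval : s(v, w1) = s(v, w2) := congrArg Subtype.val this
    exact Sym2.congr_right.mp hval
  · intro i hi
    obtain ⟨-, e, hve, hci⟩ := Finset.mem_filter.mp hi
    obtain ⟨w, hvw, hew⟩ := edge_at e.2 hve
    refine ⟨w, Set.mem_toFinset.mpr hvw, ?_⟩
    have : (⟨s(v,w), K.mem_edgeSet.mpr hvw⟩ : K.edgeSet) = e := Subtype.ext hew.symm
    exact (congrArg c this).trans hci

lemma even_ncard_sees_set {K : SimpleGraph V} {c : K.edgeSet → Fin 3} (hc : Proper c)
    (i : Fin 3) : Even {v | Sees K c v i}.ncard := by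
  classical
  set P : Set (Sym2 V) := {e | ∃ h : e ∈ K.edgeSet, c ⟨e, h⟩ = i} with hP
  have hPE : P ⊆ K.edgeSet := fun e he => he.1
  have huniq : ∀ (z : V) (e f : Sym2 V), e ∈ P → f ∈ P → z ∈ e → z ∈ f → e = f := by
    rintro z e f ⟨he, hei⟩ ⟨hf, hfi⟩ hze hzf
    have := unique_colour_edge hc (e := ⟨e, he⟩) (f := ⟨f, hf⟩) hze hzf (hei.trans hfi.symm)
    exact congrArg Subtype.val this
  -- involution directly (same proof as even_ncard_covered but without component restriction)
  let g : V → V := fun z => if h : ∃ f ∈ P, z ∈ f then Sym2.Mem.other h.choose_spec.2 else z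
  have hg_edge : ∀ (z : V) (h : ∃ f ∈ P, z ∈ f), s(z, g z) = h.choose := by
    intro z h
    simp only [g, dif_pos h]
    exact Sym2.other_spec _
  have hg_mem : ∀ (z : V) (h : ∃ f ∈ P, z ∈ f), ∃ f ∈ P, (g z) ∈ f := by
    intro z h
    refine ⟨h.choose, h.choose_spec.1, ?_⟩
    rw [← hg_edge z h]
    exact Sym2.mem_mk_right _ _
  have hsees : ∀ z, Sees K c z i ↔ ∃ f ∈ P, z ∈ f := by
    intro z
    constructor
    · rintro ⟨e, hze, hei⟩
      exact ⟨e.1, ⟨e.2, by rwa [Subtype.coe_eta]⟩, hze⟩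
    · rintro ⟨f, ⟨hf, hfi⟩, hzf⟩
      exact ⟨⟨f, hf⟩, hzf, hfi⟩
  have : {v | Sees K c v i} = {v | ∃ f ∈ P, v ∈ f} := by
    ext z; exact hsees z
  rw [this]
  apply even_ncard_of_involution _ g
  · intro z hz
    exact hg_mem z hz
  · intro z hz
    have hw : ∃ f ∈ P, (g z) ∈ f := hg_mem z hz
    have hee : hw.choose = hz.choose :=
      huniq (g z) _ _ hw.choose_spec.1 hz.choose_spec.1 hw.choose_spec.2
        (by rw [← hg_edge z hz]; exact Sym2.mem_mk_right _ _)
    have h1 : s(g z, g (g z)) = hz.choose := by rw [hg_edge (g z) hw, hee]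
    have h2 : s(g z, z) = hz.choose := by rw [← hg_edge z hz, Sym2.eq_swap]
    rw [← h2] at h1
    exact Sym2.congr_right.mp h1
  · intro z hz
    have hz' : ∃ f ∈ P, z ∈ f := hz
    have hdiag : ¬ (hz'.choose : Sym2 V).IsDiag :=
      K.not_isDiag_of_mem_edgeSet (hPE hz'.choose_spec.1)
    show (if h : ∃ f ∈ P, z ∈ f then Sym2.Mem.other h.choose_spec.2 else z) ≠ z
    rw [dif_pos hz']
    exact Sym2.other_ne hdiag _

lemma even_ncard_miss {K : SimpleGraph V} {c : K.edgeSet → Fin 3} (hc : Proper c)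
    (hV : Even (Fintype.card V)) (i : Fin 3) : Even {v | ¬ Sees K c v i}.ncard := by
  have h1 := even_ncard_sees_set hc i
  have h2 : {v | Sees K c v i}.ncard + {v | Sees K c v i}ᶜ.ncard = Fintype.card V := by
    rw [Set.ncard_add_ncard_compl, Nat.card_eq_fintype_card]
  have h3 : {v | ¬ Sees K c v i} = {v | Sees K c v i}ᶜ := by
    ext v; simp
  rw [h3]
  obtain ⟨p, hp⟩ := h1
  obtain ⟨q, hq⟩ := hV
  exact ⟨q - p, by omega⟩

end Work

namespace Work
variable {V : Type} [Fintype V]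
set_option linter.unusedSectionVars false
attribute [local instance] Classical.propDecidable

lemma sum_deg_eq (K : SimpleGraph V) : ∑ v, deg K v = 2 * K.edgeSet.ncard := by
  classical
  have h : ∑ v, deg K v = ∑ v, K.degree v := Finset.sum_congr rfl (fun v _ => deg_eq_degree K v)
  rw [h, sum_degrees_eq_twice_card_edges]
  congr 1
  rw [← Nat.card_coe_set_eq, Nat.card_eq_fintype_card, ← edgeFinset_card]

lemma deg_cubic {G : SimpleGraph V} (hcubic : IsCubic G) (v : V) : deg G v = 3 :=
  (natCard_nb G v).symm.trans (hcubic v)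

lemma even_cardV (G : SimpleGraph V) (hcubic : IsCubic G) : Even (Fintype.card V) := by
  have h := even_sum_deg G
  have hsum : ∑ v, deg G v = 3 * Fintype.card V := by
    simp only [deg_cubic hcubic]
    simp [Finset.sum_const, Finset.card_univ, mul_comm]
  rw [hsum] at h
  rcases Nat.even_mul.mp h with h3 | hV
  · exact absurd h3 (by decide)
  · exact hV

lemma sum_miss (G : SimpleGraph V) (hcubic : IsCubic G) {F : Set (Sym2 V)} (hF : F ⊆ G.edgeSet)
    {c : (G.deleteEdges F).edgeSet → Fin 3} (hc : Proper c) :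
    ∑ i : Fin 3, {v | ¬ Sees (G.deleteEdges F) c v i}.ncard = 2 * F.ncard := by
  classical
  have hdle : ∀ v, deg (G.deleteEdges F) v ≤ 3 := fun v => by
    have h1 : deg (G.deleteEdges F) v ≤ deg G v := deg_mono (G.deleteEdges_le F) v
    have h3 : deg G v = 3 := deg_cubic hcubic v
    omega
  have hmiss : ∀ v, (Finset.univ.filter (fun i => ¬ Sees (G.deleteEdges F) c v i)).card = 3 - deg (G.deleteEdges F) v := by
    intro v
    have h1 := card_sees hc v
    have htot := Finset.card_filter_add_card_filter_not
      (s := Finset.univ) (p := fun i => Sees (G.deleteEdges F) c v i)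
    have huniv : (Finset.univ : Finset (Fin 3)).card = 3 := by simp
    omega
  have hswap : ∑ i : Fin 3, {v | ¬ Sees (G.deleteEdges F) c v i}.ncard
      = ∑ v, (Finset.univ.filter (fun i => ¬ Sees (G.deleteEdges F) c v i)).card := by
    have h1 : ∀ i : Fin 3, {v | ¬ Sees (G.deleteEdges F) c v i}.ncard
        = (Finset.univ.filter (fun v => ¬ Sees (G.deleteEdges F) c v i)).card := by
      intro i
      rw [Set.ncard_eq_toFinset_card', Set.toFinset_setOf]
    simp only [h1]
    simp only [Finset.card_filter]
    exact Finset.sum_comm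
  rw [hswap]
  simp only [hmiss]
  have hptwise : ∀ v : V, (3 - deg (G.deleteEdges F) v) + deg (G.deleteEdges F) v = 3 := fun v => by
    have := hdle v; omega
  have hsplit : (∑ v, (3 - deg (G.deleteEdges F) v)) + ∑ v, deg (G.deleteEdges F) v = 3 * Fintype.card V := by
    rw [← Finset.sum_add_distrib]
    simp only [hptwise]
    simp [Finset.sum_const, Finset.card_univ, mul_comm]
  have hEK : (G.deleteEdges F).edgeSet.ncard = G.edgeSet.ncard - F.ncard := by
    rw [edgeSet_deleteEdges, Set.ncard_diff hF (Set.toFinite _)]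
  have hFle : F.ncard ≤ G.edgeSet.ncard := Set.ncard_le_ncard hF (Set.toFinite _)
  have hKsum : ∑ v, deg (G.deleteEdges F) v = 2 * (G.deleteEdges F).edgeSet.ncard := sum_deg_eq _
  have hGsum : ∑ v, deg G v = 2 * G.edgeSet.ncard := sum_deg_eq G
  have hGdeg : ∑ v, deg G v = 3 * Fintype.card V := by
    simp only [deg_cubic hcubic]
    simp [Finset.sum_const, Finset.card_univ, mul_comm]
  omega

lemma exists_unmissed (G : SimpleGraph V) (hcubic : IsCubic G) {F : Set (Sym2 V)}
    (hF : F ⊆ G.edgeSet) (hF2 : F.ncard ≤ 2)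
    {c : (G.deleteEdges F).edgeSet → Fin 3} (hc : Proper c) :
    ∃ i₀, ∀ v, Sees (G.deleteEdges F) c v i₀ := by
  by_contra h
  push_neg at h
  have hV := even_cardV G hcubic
  have heach : ∀ i : Fin 3, 2 ≤ {v | ¬ Sees (G.deleteEdges F) c v i}.ncard := by
    intro i
    obtain ⟨v, hv⟩ := h i
    have hpos : 0 < {v | ¬ Sees (G.deleteEdges F) c v i}.ncard :=
      (Set.ncard_pos (Set.toFinite _)).mpr ⟨v, hv⟩
    obtain ⟨p, hp⟩ := even_ncard_miss hc hV i
    omega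
  have hsum := sum_miss G hcubic hF hc
  have h6 : (6 : ℕ) ≤ ∑ i : Fin 3, {v | ¬ Sees (G.deleteEdges F) c v i}.ncard := by
    calc (6 : ℕ) = ∑ _i : Fin 3, 2 := by simp
    _ ≤ _ := Finset.sum_le_sum (fun i _ => heach i)
  omega

end Work

namespace Work
variable {V : Type} [Fintype V]
set_option linter.unusedSectionVars false
attribute [local instance] Classical.propDecidable

lemma twofactor_of_colouring (G : SimpleGraph V) (hcubic : IsCubic G) {F : Set (Sym2 V)}
    (hF : F ⊆ G.edgeSet) (hF2 : F.ncard ≤ 2)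
    (hcol : Colourable3 (G.deleteEdges F)) :
    ∃ H, IsTwoFactor G H ∧ _root_.oddComponents H ≤ F.ncard := by
  classical
  obtain ⟨c, hc⟩ := hcol
  have hcP : Proper c := hc
  obtain ⟨i₀, hi₀⟩ := exists_unmissed G hcubic hF hF2 hcP
  let H : SimpleGraph V :=
    { Adj := fun u w =>
        (∃ h : s(u,w) ∈ (G.deleteEdges F).edgeSet, c ⟨s(u,w), h⟩ ≠ i₀) ∨ s(u,w) ∈ F
      symm := by
        constructor
        intro u w h
        rw [show s(w,u) = s(u,w) from Sym2.eq_swap]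
        exact h
      loopless := by
        constructor
        intro v hv
        rcases hv with ⟨h, -⟩ | h
        · exact ((G.deleteEdges F).mem_edgeSet.mp h).ne rfl
        · exact (G.mem_edgeSet.mp (hF h)).ne rfl }
  have hHG : H ≤ G := by
    intro u w h
    rcases h with ⟨h, -⟩ | h
    · exact (G.deleteEdges_le F) ((G.deleteEdges F).mem_edgeSet.mp h)
    · exact G.mem_edgeSet.mp (hF h)
  have hnb : ∀ v, H.neighborSet v =
      {w | ∃ h : s(v,w) ∈ (G.deleteEdges F).edgeSet, c ⟨s(v,w), h⟩ ≠ i₀}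
      ∪ (G.neighborSet v \ (G.deleteEdges F).neighborSet v) := by
    intro v
    ext w
    constructor
    · rintro (⟨h, hne⟩ | hFm)
      · exact Or.inl ⟨h, hne⟩
      · refine Or.inr ⟨G.mem_edgeSet.mp (hF hFm), ?_⟩
        intro hK
        rw [mem_neighborSet, deleteEdges_adj] at hK
        exact hK.2 hFm
    · rintro (⟨h, hne⟩ | ⟨hG', hnK⟩)
      · exact Or.inl ⟨h, hne⟩
      · right
        by_contra hnF
        exact hnK (by rw [mem_neighborSet, deleteEdges_adj]; exact ⟨hG', hnF⟩)
  have hNcolcard : ∀ v, {w | ∃ h : s(v,w) ∈ (G.deleteEdges F).edgeSet,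
      c ⟨s(v,w), h⟩ ≠ i₀}.ncard = deg (G.deleteEdges F) v - 1 := by
    intro v
    have hseen := card_sees hcP v
    have hi₀mem : i₀ ∈ Finset.univ.filter (fun i => Sees (G.deleteEdges F) c v i) := by
      rw [Finset.mem_filter]; exact ⟨Finset.mem_univ _, hi₀ v⟩
    have hterase : ((Finset.univ.filter
        (fun i => Sees (G.deleteEdges F) c v i)).erase i₀).card
        = deg (G.deleteEdges F) v - 1 := by
      rw [Finset.card_erase_of_mem hi₀mem, hseen]
    rw [← hterase, Set.ncard_eq_toFinset_card']
    refine Finset.card_bij (fun w hw => c ⟨s(v,w), (Set.mem_toFinset.mp hw).choose⟩) ?_ ?_ ?_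
    · intro w hw
      rw [Finset.mem_erase]
      refine ⟨(Set.mem_toFinset.mp hw).choose_spec, ?_⟩
      rw [Finset.mem_filter]
      exact ⟨Finset.mem_univ _, ⟨_, Sym2.mem_mk_left _ _, rfl⟩⟩
    · intro w1 hw1 w2 hw2 heq
      have := unique_colour_edge hcP (Sym2.mem_mk_left v w1) (Sym2.mem_mk_left v w2) heq
      have hval : s(v, w1) = s(v, w2) := congrArg Subtype.val this
      exact Sym2.congr_right.mp hval
    · intro i hi
      obtain ⟨hne, hif⟩ := Finset.mem_erase.mp hi
      obtain ⟨-, e, hve, hci⟩ := Finset.mem_filter.mp hif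
      obtain ⟨w, hvw, hew⟩ := edge_at e.2 hve
      have hmem : s(v,w) ∈ (G.deleteEdges F).edgeSet := (G.deleteEdges F).mem_edgeSet.mpr hvw
      have hkey : ∀ (h : s(v,w) ∈ (G.deleteEdges F).edgeSet), c ⟨s(v,w), h⟩ = i := by
        intro h
        have : (⟨s(v,w), h⟩ : (G.deleteEdges F).edgeSet) = e := Subtype.ext hew.symm
        exact (congrArg c this).trans hci
      have hwmem : w ∈ ({w | ∃ h : s(v,w) ∈ (G.deleteEdges F).edgeSet,
          c ⟨s(v,w), h⟩ ≠ i₀} : Set V).toFinset := by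
        rw [Set.mem_toFinset]
        exact ⟨hmem, by rw [hkey hmem]; exact hne⟩
      exact ⟨w, hwmem, hkey _⟩
  have hNFcard : ∀ v, (G.neighborSet v \ (G.deleteEdges F).neighborSet v).ncard
      = 3 - deg (G.deleteEdges F) v := by
    intro v
    have hsub : (G.deleteEdges F).neighborSet v ⊆ G.neighborSet v :=
      fun w hw => (G.deleteEdges_le F) hw
    rw [Set.ncard_diff hsub (Set.toFinite _)]
    have : (G.neighborSet v).ncard = 3 := deg_cubic hcubic v
    rw [this]
    rfl
  have hdegH : ∀ v, deg H v = 2 := by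
    intro v
    have hdisj : Disjoint ({w | ∃ h : s(v,w) ∈ (G.deleteEdges F).edgeSet,
        c ⟨s(v,w), h⟩ ≠ i₀} : Set V) (G.neighborSet v \ (G.deleteEdges F).neighborSet v) := by
      rw [Set.disjoint_left]
      rintro w ⟨h, -⟩ ⟨-, hnK⟩
      exact hnK ((G.deleteEdges F).mem_edgeSet.mp h)
    rw [deg, hnb v, Set.ncard_union_eq hdisj (Set.toFinite _) (Set.toFinite _),
      hNcolcard, hNFcard]
    obtain ⟨e, hve, -⟩ := hi₀ v
    have h1 : 1 ≤ deg (G.deleteEdges F) v := deg_pos_of_edge e.2 hve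
    have h3 : deg (G.deleteEdges F) v ≤ 3 := by
      have h1' : deg (G.deleteEdges F) v ≤ deg G v := deg_mono (G.deleteEdges_le F) v
      have := deg_cubic hcubic v
      omega
    omega
  have hFH : ∀ (f : Sym2 V), f ∈ F → f ∈ H.edgeSet := by
    refine Sym2.ind ?_
    intro u w hfm
    exact H.mem_edgeSet.mpr (Or.inr hfm)
  have heven : ∀ C : H.ConnectedComponent, (∀ z ∈ C.supp, ¬ ∃ f ∈ F, z ∈ f) →
      Even C.supp.ncard := by
    intro C hCno
    obtain ⟨a, ha⟩ := exists_ne i₀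
    set P : Set (Sym2 V) := {e | ∃ h : e ∈ (G.deleteEdges F).edgeSet, c ⟨e, h⟩ = a} with hP
    have hPH : P ⊆ H.edgeSet := by
      intro e he
      obtain ⟨he', hea⟩ := he
      revert he' hea
      refine Sym2.ind (fun u w => ?_) e
      intro hmem hcol
      exact H.mem_edgeSet.mpr (Or.inl ⟨hmem, by rw [hcol]; exact ha⟩)
    have huniq : ∀ (z : V) (e f : Sym2 V), e ∈ P → f ∈ P → z ∈ e → z ∈ f → e = f := by
      rintro z e f ⟨he, hea⟩ ⟨hf, hfa⟩ hze hzf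
      exact congrArg Subtype.val
        (unique_colour_edge hcP (e := ⟨e, he⟩) (f := ⟨f, hf⟩) hze hzf (hea.trans hfa.symm))
    have hcov := even_ncard_covered H P hPH huniq C
    have hEq : {z | z ∈ C.supp ∧ ∃ f ∈ P, z ∈ f} = C.supp := by
      ext z
      simp only [Set.mem_setOf_eq, and_iff_left_iff_imp]
      intro hz
      have hno := hCno z hz
      have hnbz : (G.deleteEdges F).neighborSet z = G.neighborSet z := by
        ext w
        rw [mem_neighborSet, mem_neighborSet, deleteEdges_adj]
        constructor
        · rintro ⟨h, -⟩; exact h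
        · intro h
          exact ⟨h, fun hFm => hno ⟨s(z,w), hFm, Sym2.mem_mk_left _ _⟩⟩
      have hdz : deg (G.deleteEdges F) z = 3 := by
        rw [deg, hnbz]
        exact deg_cubic hcubic z
      have hseen := card_sees hcP z
      rw [hdz] at hseen
      have huniv : Finset.univ.filter (fun i => Sees (G.deleteEdges F) c z i)
          = Finset.univ := Finset.eq_univ_of_card _ (by rw [hseen]; simp)
      have hsa : Sees (G.deleteEdges F) c z a := by
        have : a ∈ Finset.univ.filter (fun i => Sees (G.deleteEdges F) c z i) := by
          rw [huniv]; exact Finset.mem_univ a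
        exact (Finset.mem_filter.mp this).2
      obtain ⟨e, hze, hea⟩ := hsa
      exact ⟨e.1, ⟨e.2, by rwa [Subtype.coe_eta]⟩, hze⟩
    rw [hEq] at hcov
    exact hcov
  have hodd : ∀ C : H.ConnectedComponent, Odd (Nat.card C.supp) → ∃ f ∈ F, ∃ z ∈ C.supp, z ∈ f := by
    intro C hC
    by_contra h
    push_neg at h
    have := heven C (fun z hz ⟨f, hf, hzf⟩ => h f hf z hz hzf)
    rw [Nat.card_coe_set_eq] at hC
    exact ((Nat.not_even_iff_odd.mpr hC)) this
  refine ⟨H, ⟨hHG, fun v => (natCard_nb H v).trans (hdegH v)⟩, ?_⟩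
  let Φ : {C : H.ConnectedComponent // Odd (Nat.card C.supp)} → F := fun C =>
    ⟨(hodd C.1 C.2).choose, (hodd C.1 C.2).choose_spec.1⟩
  have hΦinj : Function.Injective Φ := by
    intro C1 C2 heq
    obtain ⟨z1, hz1s, hz1f⟩ := (hodd C1.1 C1.2).choose_spec.2
    obtain ⟨z2, hz2s, hz2f⟩ := (hodd C2.1 C2.2).choose_spec.2
    have hff : (hodd C1.1 C1.2).choose = (hodd C2.1 C2.2).choose := congrArg Subtype.val heq
    rw [← hff] at hz2f
    have hfF : (hodd C1.1 C1.2).choose ∈ F := (hodd C1.1 C1.2).choose_spec.1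
    obtain ⟨u, huw, hfu⟩ := edge_at (hFH _ hfF) hz1f
    have hz2' : z2 = z1 ∨ z2 = u := by
      rw [hfu] at hz2f
      exact Sym2.mem_iff.mp hz2f
    apply Subtype.ext
    rw [ConnectedComponent.mem_supp_iff] at hz1s hz2s
    rcases hz2' with rfl | rfl
    · rw [← hz1s, ← hz2s]
    · rw [← hz1s, ← hz2s]
      exact ConnectedComponent.connectedComponentMk_eq_of_adj huw
  have hle := Nat.card_le_card_of_injective Φ hΦinj
  rw [Nat.card_coe_set_eq] at hle
  exact hle

end Work

namespace Work
variable {V : Type} [Fintype V]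
set_option linter.unusedSectionVars false
attribute [local instance] Classical.propDecidable

lemma sym2_mem_exists (e : Sym2 V) : ∃ z, z ∈ e :=
  Sym2.ind (fun u w => ⟨u, Sym2.mem_mk_left u w⟩) e

lemma colouring_of_twofactor (G : SimpleGraph V) (hcubic : IsCubic G) {H : SimpleGraph V}
    (hH : IsTwoFactor G H) :
    ∃ F : Set (Sym2 V), F ⊆ G.edgeSet ∧ F.ncard = _root_.oddComponents H ∧
      Colourable3 (G.deleteEdges F) := by
  classical
  obtain ⟨hHG, hdeg2'⟩ := hH
  have hdeg2 : ∀ v, deg H v = 2 := fun v => (natCard_nb H v).symm.trans (hdeg2' v)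
  have hchoose : ∀ C : H.ConnectedComponent, ∃ (e : Sym2 V), e ∈ H.edgeSet ∧
      ∀ z ∈ e, z ∈ C.supp := by
    intro C
    obtain ⟨v, hv⟩ := C.exists_rep
    have hvs : v ∈ C.supp := by
      rw [ConnectedComponent.mem_supp_iff]
      exact hv
    have h2 := hdeg2 v
    have hne : (H.neighborSet v).Nonempty := by
      rw [← Set.ncard_pos (Set.toFinite _)]
      have hd : deg H v = (H.neighborSet v).ncard := rfl
      omega
    obtain ⟨w, hw⟩ := hne
    refine ⟨s(v,w), H.mem_edgeSet.mpr hw, ?_⟩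
    intro z hz
    rcases Sym2.mem_iff.mp hz with rfl | rfl
    · exact hvs
    · exact adj_mem_supp hvs hw
  let χ : {C : H.ConnectedComponent // Odd (Nat.card C.supp)} → Sym2 V := fun C =>
    (hchoose C.1).choose
  have hχH : ∀ C, χ C ∈ H.edgeSet := fun C => (hchoose C.1).choose_spec.1
  have hχsupp : ∀ C, ∀ z ∈ χ C, z ∈ C.1.supp := fun C => (hchoose C.1).choose_spec.2
  set F := Set.range χ with hFdef
  have hFH : F ⊆ H.edgeSet := by
    rintro e ⟨C, rfl⟩
    exact hχH C
  have hFG : F ⊆ G.edgeSet := hFH.trans (edgeSet_mono hHG)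
  have hχinj : Function.Injective χ := by
    intro C1 C2 heq
    obtain ⟨z, hz⟩ := sym2_mem_exists (χ C1)
    have h1 := hχsupp C1 z hz
    have h2 := hχsupp C2 z (heq ▸ hz)
    apply Subtype.ext
    rw [ConnectedComponent.mem_supp_iff] at h1 h2
    rw [← h1, ← h2]
  have hFcard : F.ncard = _root_.oddComponents H := by
    rw [hFdef, ← Nat.card_coe_set_eq, Nat.card_range_of_injective hχinj]
    rfl
  have hdegK : ∀ v, deg (H.deleteEdges F) v ≤ 2 := fun v =>
    le_trans (deg_mono (H.deleteEdges_le F) v) (le_of_eq (hdeg2 v))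
  have hendpoint : ∀ (f : Sym2 V), f ∈ F → ∀ z ∈ f, deg (H.deleteEdges F) z ≤ 1 := by
    intro f hf z hz
    obtain ⟨w, hw, rfl⟩ := edge_at (hFH hf) hz
    have hle : H.deleteEdges F ≤ H.deleteEdges {s(z,w)} := by
      intro u u' h
      rw [deleteEdges_adj] at h ⊢
      refine ⟨h.1, ?_⟩
      intro hm
      rw [Set.mem_singleton_iff] at hm
      exact h.2 (hm ▸ hf)
    have h1 := deg_delete_endpoint H hw
    have h2 := deg_mono hle z
    rw [h1, hdeg2 z] at h2
    exact h2
  have hevenK : ∀ C' : (H.deleteEdges F).ConnectedComponent,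
      (∀ v ∈ C'.supp, deg (H.deleteEdges F) v = 2) → Even C'.supp.ncard := by
    intro C' h2
    have hnotend : ∀ z ∈ C'.supp, ¬ ∃ f ∈ F, z ∈ f := by
      rintro z hz ⟨f, hf, hzf⟩
      have ha := hendpoint f hf z hzf
      have hb := h2 z hz
      omega
    have hcl : ∀ z ∈ C'.supp, ∀ w, H.Adj z w → w ∈ C'.supp := by
      intro z hz w hzw
      have hne : s(z,w) ∉ F := fun hm => hnotend z hz ⟨s(z,w), hm, Sym2.mem_mk_left _ _⟩
      exact adj_mem_supp hz (by rw [deleteEdges_adj]; exact ⟨hzw, hne⟩)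
    obtain ⟨D, hD⟩ := supp_closed_eq_comp (H.deleteEdges_le F) C' hcl
    have hDeven : ¬ Odd (Nat.card D.supp) := by
      intro hodd
      obtain ⟨z, hzf⟩ := sym2_mem_exists (χ ⟨D, hodd⟩)
      have hzs : z ∈ D.supp := hχsupp ⟨D, hodd⟩ z hzf
      rw [hD] at hzs
      exact hnotend z hzs ⟨χ ⟨D, hodd⟩, ⟨_, rfl⟩, hzf⟩
    rw [← hD, ← Nat.card_coe_set_eq]
    exact Nat.not_odd_iff_even.mp hDeven
  obtain ⟨M, hME, hMuniq, hMcov⟩ :=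
    exists_matching (H.deleteEdges F).edgeSet.ncard (H.deleteEdges F) rfl hdegK hevenK
  refine ⟨F, hFG, hFcard, ?_⟩
  refine ⟨fun e => if h : (e : Sym2 V) ∈ H.edgeSet then
    (if (e : Sym2 V) ∈ M then 0 else 1) else 2, ?_⟩
  rintro e f ⟨hne, z, hze, hzf⟩
  dsimp only
  have heE : (e : Sym2 V) ∈ G.edgeSet \ F := (G.edgeSet_deleteEdges F) ▸ e.2
  have hfE : (f : Sym2 V) ∈ G.edgeSet \ F := (G.edgeSet_deleteEdges F) ▸ f.2
  have hnev : (e : Sym2 V) ≠ (f : Sym2 V) := hne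
  have hHK : ∀ (g : Sym2 V), g ∈ G.edgeSet \ F → g ∈ H.edgeSet →
      g ∈ (H.deleteEdges F).edgeSet := by
    intro g hg hgH
    rw [edgeSet_deleteEdges]
    exact ⟨hgH, hg.2⟩
  have hGH : ∀ (g : Sym2 V), g ∈ G.edgeSet \ F → g ∉ H.edgeSet →
      g ∈ (G \ H).edgeSet := by
    intro g hg hgH
    rw [edgeSet_sdiff]
    exact ⟨hg.1, hgH⟩
  by_cases heH : (e : Sym2 V) ∈ H.edgeSet <;> by_cases hfH : (f : Sym2 V) ∈ H.edgeSet
  · have heK := hHK _ heE heH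
    have hfK := hHK _ hfE hfH
    rw [dif_pos heH, dif_pos hfH]
    by_cases heM : (e : Sym2 V) ∈ M <;> by_cases hfM : (f : Sym2 V) ∈ M
    · exact absurd (hMuniq z _ heM _ hfM hze hzf) hnev
    · rw [if_pos heM, if_neg hfM]; simp
    · rw [if_neg heM, if_pos hfM]; simp
    · exfalso
      have h2 : 2 ≤ deg (H.deleteEdges F) z := two_le_deg_of_two_edges heK hfK hnev hze hzf
      have hd2 : deg (H.deleteEdges F) z = 2 := le_antisymm (hdegK z) h2
      obtain ⟨g, hgM, hzg⟩ := hMcov z hd2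
      have hge : (e : Sym2 V) ≠ g := fun h => heM (h ▸ hgM)
      have hgf : (f : Sym2 V) ≠ g := fun h => hfM (h ▸ hgM)
      have h3 := three_le_deg_of_three_edges heK hfK (hME hgM) hnev hge hgf hze hzf hzg
      have := hdegK z
      omega
  · rw [dif_pos heH, dif_neg hfH]
    split <;> simp
  · rw [dif_neg heH, dif_pos hfH]
    split <;> simp
  · exfalso
    have hdGH : deg (G \ H) z = 1 := by
      have hnbeq : (G \ H).neighborSet z = G.neighborSet z \ H.neighborSet z := by
        ext w
        rw [mem_neighborSet, sdiff_adj]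
        exact Iff.rfl
      have hsub : H.neighborSet z ⊆ G.neighborSet z := fun w hw => hHG hw
      rw [deg, hnbeq, Set.ncard_diff hsub (Set.toFinite _),
        show (G.neighborSet z).ncard = 3 from deg_cubic hcubic z,
        show (H.neighborSet z).ncard = 2 from hdeg2 z]
    have h2 := two_le_deg_of_two_edges (hGH _ heE heH) (hGH _ hfE hfH) hnev hze hzf
    omega

end Work

namespace Work
variable {V : Type} [Fintype V]
set_option linter.unusedSectionVars false
attribute [local instance] Classical.propDecidable

lemma colourable_of_one (G : SimpleGraph V) (hcubic : IsCubic G) {F : Set (Sym2 V)}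
    (hF : F ⊆ G.edgeSet) (hF1 : F.ncard = 1) (hcol : Colourable3 (G.deleteEdges F)) :
    Colourable3 G := by
  classical
  obtain ⟨e₀, rfl⟩ := Set.ncard_eq_one.mp hF1
  obtain ⟨c, hc⟩ := hcol
  have hcP : Proper c := hc
  have he₀ : e₀ ∈ G.edgeSet := hF rfl
  obtain ⟨x, y, rfl, hxy⟩ := (Sym2.ind
    (f := fun e => e ∈ G.edgeSet → ∃ x y, s(x,y) = e ∧ G.Adj x y)
    (fun x y h => ⟨x, y, rfl, G.mem_edgeSet.mp h⟩) e₀) he₀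
  have hsee3 : ∀ z, z ≠ x → z ≠ y → ∀ i, Sees (G.deleteEdges {s(x,y)}) c z i := by
    intro z hzx hzy i
    have hdz : deg (G.deleteEdges {s(x,y)}) z = 3 := by
      rw [deg_delete_not_endpoint G z hzx hzy]
      exact deg_cubic hcubic z
    have hseen := card_sees hcP z
    rw [hdz] at hseen
    have huniv : Finset.univ.filter (fun i => Sees (G.deleteEdges {s(x,y)}) c z i)
        = Finset.univ := Finset.eq_univ_of_card _ (by rw [hseen]; simp)
    have : i ∈ Finset.univ.filter (fun i => Sees (G.deleteEdges {s(x,y)}) c z i) := by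
      rw [huniv]; exact Finset.mem_univ i
    exact (Finset.mem_filter.mp this).2
  have hxdeg : deg (G.deleteEdges {s(x,y)}) x = 2 := by
    rw [deg_delete_endpoint G hxy, deg_cubic hcubic]
  have hxa : ∃ a, ¬ Sees (G.deleteEdges {s(x,y)}) c x a := by
    by_contra h
    push_neg at h
    have hseen := card_sees hcP x
    have huniv : Finset.univ.filter (fun i => Sees (G.deleteEdges {s(x,y)}) c x i)
        = Finset.univ := Finset.eq_univ_iff_forall.mpr
      (fun i => Finset.mem_filter.mpr ⟨Finset.mem_univ _, h i⟩)
    rw [huniv, hxdeg] at hseen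
    simp at hseen
  obtain ⟨a, ha⟩ := hxa
  have hmsub : {v | ¬ Sees (G.deleteEdges {s(x,y)}) c v a} ⊆ {x, y} := by
    intro z hz
    by_contra hzxy
    rw [Set.mem_insert_iff, Set.mem_singleton_iff] at hzxy
    push_neg at hzxy
    exact hz (hsee3 z hzxy.1 hzxy.2 a)
  have hmeven := even_ncard_miss hcP (even_cardV G hcubic) a
  have hya : ¬ Sees (G.deleteEdges {s(x,y)}) c y a := by
    by_contra hys
    have hsing : {v | ¬ Sees (G.deleteEdges {s(x,y)}) c v a} = {x} := by
      apply Set.eq_singleton_iff_unique_mem.mpr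
      refine ⟨ha, ?_⟩
      intro z hz
      rcases hmsub hz with rfl | hz'
      · rfl
      · rw [Set.mem_singleton_iff] at hz'
        subst hz'
        exact absurd hys hz
    rw [hsing, Set.ncard_singleton] at hmeven
    exact (by decide : ¬ Even 1) hmeven
  refine ⟨fun g => if h : (g : Sym2 V) ∈ (G.deleteEdges {s(x,y)}).edgeSet then c ⟨g, h⟩ else a, ?_⟩
  rintro g1 g2 ⟨hne, z, hz1, hz2⟩
  dsimp only
  have hval : (g1 : Sym2 V) ≠ (g2 : Sym2 V) := hne
  have hmiss : ∀ (g : G.edgeSet), (g : Sym2 V) ∉ (G.deleteEdges {s(x,y)}).edgeSet →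
      (g : Sym2 V) = s(x,y) := by
    intro g hg
    by_contra hne2
    exact hg (by rw [edgeSet_deleteEdges]; exact ⟨g.2, by simpa using hne2⟩)
  by_cases h1 : (g1 : Sym2 V) ∈ (G.deleteEdges {s(x,y)}).edgeSet <;>
    by_cases h2 : (g2 : Sym2 V) ∈ (G.deleteEdges {s(x,y)}).edgeSet
  · rw [dif_pos h1, dif_pos h2]
    exact hcP ⟨_, h1⟩ ⟨_, h2⟩ ⟨hval, z, hz1, hz2⟩
  · rw [dif_pos h1, dif_neg h2]
    have hza : ¬ Sees (G.deleteEdges {s(x,y)}) c z a := by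
      have : z ∈ s(x,y) := (hmiss g2 h2) ▸ hz2
      rcases Sym2.mem_iff.mp this with rfl | rfl
      exacts [ha, hya]
    intro hcontra
    exact hza ⟨⟨_, h1⟩, hz1, hcontra⟩
  · rw [dif_neg h1, dif_pos h2]
    have hza : ¬ Sees (G.deleteEdges {s(x,y)}) c z a := by
      have : z ∈ s(x,y) := (hmiss g1 h1) ▸ hz1
      rcases Sym2.mem_iff.mp this with rfl | rfl
      exacts [ha, hya]
    intro hcontra
    exact hza ⟨⟨_, h2⟩, hz2, hcontra.symm⟩
  · exact absurd ((hmiss g1 h1).trans (hmiss g2 h2).symm) hval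

lemma even_oddComponents (H : SimpleGraph V) (hV : Even (Fintype.card V)) :
    Even (_root_.oddComponents H) := by
  classical
  have hfib := Finset.card_eq_sum_card_fiberwise
    (f := fun v => H.connectedComponentMk v) (s := Finset.univ) (t := Finset.univ)
    (fun x _ => Finset.mem_univ _)
  rw [Finset.card_univ] at hfib
  have hsum : ∑ C : H.ConnectedComponent, C.supp.ncard = Fintype.card V := by
    refine (Finset.sum_congr rfl ?_).trans hfib.symm
    intro C _
    have hts : C.supp.toFinset = Finset.univ.filter (fun v => H.connectedComponentMk v = C) := by
      ext v
      simp [ConnectedComponent.mem_supp_iff]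
    rw [Set.ncard_eq_toFinset_card', hts]
  have heven : Even (∑ C : H.ConnectedComponent, C.supp.ncard) := hsum ▸ hV
  have hcard := (Finset.even_sum_iff_even_card_odd
    (f := fun C : H.ConnectedComponent => C.supp.ncard)).mp heven
  rw [_root_.oddComponents, Nat.card_eq_fintype_card, Fintype.card_subtype]
  have hfilt : Finset.filter (fun x : H.ConnectedComponent => Odd (Nat.card ↑x.supp)) Finset.univ
      = Finset.filter (fun x => Odd x.supp.ncard) Finset.univ := by
    apply Finset.filter_congr
    intro x _
    rw [Nat.card_coe_set_eq]
  rw [hfilt]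
  exact hcard

end Work

namespace Work
variable {V : Type} [Fintype V]
set_option linter.unusedSectionVars false
attribute [local instance] Classical.propDecidable

lemma sInf_eq_two_iff (S : Set ℕ) : sInf S = 2 ↔ 2 ∈ S ∧ 0 ∉ S ∧ 1 ∉ S := by
  constructor
  · intro h
    have hne : S.Nonempty := by
      by_contra hemp
      rw [Set.not_nonempty_iff_eq_empty.mp hemp, Nat.sInf_empty] at h
      exact absurd h (by norm_num)
    have hmem := Nat.sInf_mem hne
    rw [h] at hmem
    refine ⟨hmem, fun h0 => ?_, fun h1 => ?_⟩
    · have := Nat.sInf_le h0; omega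
    · have := Nat.sInf_le h1; omega
  · rintro ⟨h2, h0, h1⟩
    have hle : sInf S ≤ 2 := Nat.sInf_le h2
    have hmem := Nat.sInf_mem ⟨2, h2⟩
    have hne0 : sInf S ≠ 0 := fun h => h0 (h ▸ hmem)
    have hne1 : sInf S ≠ 1 := fun h => h1 (h ▸ hmem)
    omega

theorem main (G : SimpleGraph V) (hcubic : IsCubic G) :
    resistance G = 2 ↔ oddness G = 2 := by
  classical
  have hnc_of : ∀ (h0 : (0 : ℕ) ∉ {n : ℕ | ∃ F : Set (Sym2 V), F ⊆ G.edgeSet ∧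
      Nat.card F = n ∧ Colourable3 (G.deleteEdges F)}), ¬ Colourable3 G := by
    intro h0 hcol
    apply h0
    refine ⟨∅, Set.empty_subset _, by simp, ?_⟩
    rw [SimpleGraph.deleteEdges_empty]
    exact hcol
  constructor
  · intro hρ
    obtain ⟨h2, h0, h1⟩ := (sInf_eq_two_iff _).mp hρ
    obtain ⟨F, hFsub, hFcard, hFcol⟩ := h2
    have hFn : F.ncard = 2 := by rw [← Nat.card_coe_set_eq]; exact hFcard
    obtain ⟨H, hHtf, hHodd⟩ :=
      twofactor_of_colouring G hcubic hFsub (le_of_eq hFn) hFcol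
    have hnc : ¬ Colourable3 G := hnc_of h0
    have hω0 : ∀ H', IsTwoFactor G H' → _root_.oddComponents H' ≠ 0 := by
      intro H' hH' h0'
      obtain ⟨F', hF'sub, hF'card, hF'col⟩ := colouring_of_twofactor G hcubic hH'
      rw [h0'] at hF'card
      have hF'emp : F' = ∅ := (Set.ncard_eq_zero (Set.toFinite _)).mp hF'card
      rw [hF'emp, SimpleGraph.deleteEdges_empty] at hF'col
      exact hnc hF'col
    have hpar := even_oddComponents H (even_cardV G hcubic)
    have hH2 : _root_.oddComponents H = 2 := by
      rw [hFn] at hHodd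
      have hne0 := hω0 H hHtf
      obtain ⟨r, hr⟩ := hpar
      omega
    apply (sInf_eq_two_iff _).mpr
    refine ⟨⟨H, hHtf, hH2⟩, ?_, ?_⟩
    · rintro ⟨H', hH', h0'⟩
      exact hω0 H' hH' h0'
    · rintro ⟨H', hH', h1'⟩
      have := even_oddComponents H' (even_cardV G hcubic)
      rw [h1'] at this
      exact (by decide : ¬ Even 1) this
  · intro hω
    obtain ⟨⟨H, hHtf, hH2⟩, h0, h1⟩ := (sInf_eq_two_iff _).mp hω
    obtain ⟨F, hFsub, hFcard, hFcol⟩ := colouring_of_twofactor G hcubic hHtf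
    rw [hH2] at hFcard
    apply (sInf_eq_two_iff _).mpr
    refine ⟨⟨F, hFsub, by rw [Nat.card_coe_set_eq, hFcard], hFcol⟩, ?_, ?_⟩
    · rintro ⟨F0, hF0sub, hF0card, hF0col⟩
      have hF0n : F0.ncard = 0 := by rw [← Nat.card_coe_set_eq]; exact hF0card
      obtain ⟨H0, hH0tf, hH0odd⟩ :=
        twofactor_of_colouring G hcubic hF0sub (by omega) hF0col
      exact h0 ⟨H0, hH0tf, by omega⟩
    · rintro ⟨F1, hF1sub, hF1card, hF1col⟩
      have hF1n : F1.ncard = 1 := by rw [← Nat.card_coe_set_eq]; exact hF1card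
      have hcolG := colourable_of_one G hcubic hF1sub hF1n hF1col
      have hcolempty : Colourable3 (G.deleteEdges (∅ : Set (Sym2 V))) := by
        rw [SimpleGraph.deleteEdges_empty]
        exact hcolG
      obtain ⟨H0, hH0tf, hH0odd⟩ :=
        twofactor_of_colouring G hcubic (Set.empty_subset _) (by simp) hcolempty
      have hempty : (∅ : Set (Sym2 V)).ncard = 0 := Set.ncard_empty _
      exact h0 ⟨H0, hH0tf, by omega⟩

end Work

/-- For a bridgeless cubic graph, the resistance equals 2 if and only if
the oddness equals 2. -/
theorem stmt_10 {V : Type} [Fintype V] (G : SimpleGraph V)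
    (hbridgeless : Bridgeless G) (hcubic : IsCubic G) :
    resistance G = 2 ↔ oddness G = 2 := by
  exact Work.main G hcubic
end
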